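/- arXiv:1208.3728 — 9 statements merged into one kernel-verified Lean document; each statement's English description precedes it below -/
import Mathlib

section
/- Let F ⊂ ℝ^d be a convex compact set, R : ℝ^d → ℝ a convex function with min_{f∈F} R(f) = 0, η > 0, x_1,…,x_T ∈ ℝ^d arbitrary, M_1 = 0 and M_2,…,M_T ∈ ℝ^d arbitrary. Define f_1 = argmin_{f∈F} R(f), f_{t+1} = argmin_{f∈F} [ η⟨f, Σ_{s=1}^{t} x_s + M_{t+1}⟩ + R(f) ] and g_{t+1} = argmin_{f∈F} [ η⟨f, Σ_{s=1}^{t} x_s⟩ + R(f) ] (assume the argmins exist and f_t, g_{t+1} denote any such minimizers). Then for every τ ∈ [T] and every f* ∈ F: Σ_{t=1}^{τ} ⟨f_t − g_{t+1}, M_t⟩ + Σ_{t=1}^{τ} ⟨g_{t+1}, x_t⟩ ≤ Σ_{t=1}^{τ} ⟨f*, x_t⟩ + η^{-1} R(f*). -/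
open Finset

private lemma ip_sum_aux {d : ℕ} (p : Fin d → ℝ) (s : Finset ℕ) (x : ℕ → Fin d → ℝ) :
    (∑ i, p i * (∑ t ∈ s, x t) i) = ∑ t ∈ s, ∑ i, p i * x t i := by
  simp only [Finset.sum_apply, Finset.mul_sum]
  exact Finset.sum_comm

/-- **Be-the-leader induction for Optimistic Follow the Regularized Leader.**
`F ⊂ ℝ^d` convex compact, `R` convex with `min_{f ∈ F} R f = 0`, `η > 0`,
`x₁,…,x_T` and `M₂,…,M_T` arbitrary, `M₁ = 0`.  `f_{t+1}` and `g_{t+1}` are the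
optimistic (with hint `M_{t+1}`) and standard FTRL iterates.  Then for every
`τ ∈ [T]` and every `f* ∈ F`:
`Σ_{t=1}^τ ⟨f_t − g_{t+1}, M_t⟩ + Σ_{t=1}^τ ⟨g_{t+1}, x_t⟩ ≤ Σ_{t=1}^τ ⟨f*, x_t⟩ + η⁻¹ R f*`. -/
theorem stmt_1 {d T : ℕ} (F : Set (Fin d → ℝ)) (hFconv : Convex ℝ F)
    (hFcomp : IsCompact F)
    (R : (Fin d → ℝ) → ℝ) (hRconv : ConvexOn ℝ Set.univ R)
    (hRnonneg : ∀ p ∈ F, 0 ≤ R p)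
    (η : ℝ) (hη : 0 < η)
    (x M : ℕ → (Fin d → ℝ)) (hM1 : M 1 = 0)
    (f g : ℕ → (Fin d → ℝ))
    (hf1 : f 1 ∈ F ∧ ∀ p ∈ F, R (f 1) ≤ R p) (hf1min : R (f 1) = 0)
    (hf : ∀ t ∈ Icc 1 T, f (t + 1) ∈ F ∧ ∀ p ∈ F,
      η * (∑ i, f (t + 1) i * ((∑ s ∈ Icc 1 t, x s) i + M (t + 1) i)) + R (f (t + 1)) ≤
        η * (∑ i, p i * ((∑ s ∈ Icc 1 t, x s) i + M (t + 1) i)) + R p)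
    (hg : ∀ t ∈ Icc 1 T, g (t + 1) ∈ F ∧ ∀ p ∈ F,
      η * (∑ i, g (t + 1) i * (∑ s ∈ Icc 1 t, x s) i) + R (g (t + 1)) ≤
        η * (∑ i, p i * (∑ s ∈ Icc 1 t, x s) i) + R p)
    (τ : ℕ) (hτ : τ ∈ Icc 1 T) (fstar : Fin d → ℝ) (hfstar : fstar ∈ F) :
    (∑ t ∈ Icc 1 τ, ∑ i, (f t i - g (t + 1) i) * M t i)
      + (∑ t ∈ Icc 1 τ, ∑ i, g (t + 1) i * x t i)
    ≤ (∑ t ∈ Icc 1 τ, ∑ i, fstar i * x t i) + η⁻¹ * R fstar := by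
  rw [Finset.mem_Icc] at hτ
  -- expansion lemmas
  have expand : ∀ (p : Fin d → ℝ) (t : ℕ),
      (∑ i, p i * ((∑ s ∈ Icc 1 t, x s) i + M (t + 1) i))
        = (∑ i, p i * (∑ s ∈ Icc 1 t, x s) i) + ∑ i, p i * M (t + 1) i := by
    intro p t
    simp [mul_add, Finset.sum_add_distrib]
  have hsucc : ∀ (p : Fin d → ℝ) (t : ℕ),
      (∑ i, p i * (∑ s ∈ Icc 1 (t + 1), x s) i)
        = (∑ i, p i * (∑ s ∈ Icc 1 t, x s) i) + ∑ i, p i * x (t + 1) i := by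
    intro p t
    have h : (∑ s ∈ Icc 1 (t + 1), x s) = (∑ s ∈ Icc 1 t, x s) + x (t + 1) :=
      Finset.sum_Icc_succ_top (by omega) x
    rw [h]
    simp [mul_add, Finset.sum_add_distrib]
  have hsub : ∀ (a b c : Fin d → ℝ),
      (∑ i, (a i - b i) * c i) = (∑ i, a i * c i) - ∑ i, b i * c i := by
    intro a b c
    simp [sub_mul, Finset.sum_sub_distrib]
  have key : ∀ τ', 1 ≤ τ' → τ' ≤ T →
      η * (∑ t ∈ Icc 1 τ', ((∑ i, (f t i - g (t + 1) i) * M t i) + ∑ i, g (t + 1) i * x t i))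
        ≤ η * (∑ i, g (τ' + 1) i * (∑ s ∈ Icc 1 τ', x s) i) + R (g (τ' + 1)) := by
    intro τ' h1
    induction τ', h1 using Nat.le_induction with
    | base =>
      intro hT
      have hg2 := hg 1 (Finset.mem_Icc.2 ⟨le_refl 1, hT⟩)
      simp only [Finset.Icc_self, Finset.sum_singleton, hM1, Pi.zero_apply, mul_zero,
        Finset.sum_const_zero, zero_add]
      linarith [hRnonneg _ hg2.1]
    | succ n h1 ih =>
      intro hT
      have ih' := ih (by omega)
      have hfn := hf n (Finset.mem_Icc.2 ⟨h1, by omega⟩)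
      have hgn := hg n (Finset.mem_Icc.2 ⟨h1, by omega⟩)
      have hgn1 := hg (n + 1) (Finset.mem_Icc.2 ⟨by omega, hT⟩)
      -- E1 : optimality of g (n+1) vs f (n+1)
      have E1 := hgn.2 (f (n + 1)) hfn.1
      -- E2 : optimality of f (n+1) vs g (n+2)
      have E2 := hfn.2 (g (n + 1 + 1)) hgn1.1
      rw [expand, expand] at E2
      rw [Finset.sum_Icc_succ_top (by omega : 1 ≤ n + 1)]
      rw [hsucc, hsub]
      nlinarith [ih', E1, E2, hη]
  have hk := key τ hτ.1 hτ.2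
  have hopt := (hg τ (Finset.mem_Icc.2 hτ)).2 fstar hfstar
  have hcomb : η * (∑ t ∈ Icc 1 τ, ((∑ i, (f t i - g (t + 1) i) * M t i)
      + ∑ i, g (t + 1) i * x t i))
      ≤ η * (∑ t ∈ Icc 1 τ, ∑ i, fstar i * x t i) + R fstar := by
    rw [← ip_sum_aux fstar (Icc 1 τ) x]
    linarith
  rw [Finset.sum_add_distrib] at hcomb
  set A := (∑ t ∈ Icc 1 τ, ∑ i, (f t i - g (t + 1) i) * M t i)
      + ∑ t ∈ Icc 1 τ, ∑ i, g (t + 1) i * x t i with hA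
  set B := ∑ t ∈ Icc 1 τ, ∑ i, fstar i * x t i with hB
  have h2 : A ≤ η⁻¹ * (η * B + R fstar) := by
    rw [← inv_mul_cancel_left₀ hη.ne' A]
    exact mul_le_mul_of_nonneg_left hcomb (by positivity)
  rw [mul_add, inv_mul_cancel_left₀ hη.ne'] at h2
  exact h2
end

section
/- Under the same setup (F ⊂ ℝ^d convex compact, R convex with min over F equal to 0, η > 0, M_1 = 0, arbitrary x_t and M_t in ℝ^d, f_{t+1} = argmin_{f∈F} [ η⟨f, Σ_{s=1}^{t} x_s + M_{t+1}⟩ + R(f) ], g_{t+1} = argmin_{f∈F} [ η⟨f, Σ_{s=1}^{t} x_s⟩ + R(f) ], f_1 = argmin_{f∈F} R(f)), for every f* ∈ F: Σ_{t=1}^{T} ⟨f_t − f*, x_t⟩ ≤ Σ_{t=1}^{T} ⟨f_t − g_{t+1}, x_t − M_t⟩ + η^{-1} R(f*). -/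
/-!
Write `Φₜ(p) = η ⟨p, Xₜ⟩ + R p` with `Xₜ = x₁ + ⋯ + xₜ`, so that `gₜ₊₁` minimises `Φₜ` and `fₜ₊₁`
minimises `Φₜ + η ⟨·, Mₜ₊₁⟩`. Comparing `fₜ₊₁` with `gₜ₊₂` in the optimistic objective gives
`Φₜ(fₜ₊₁) + η (⟨gₜ₊₂, xₜ₊₁⟩ + ⟨fₜ₊₁ - gₜ₊₂, Mₜ₊₁⟩) ≤ Φₜ₊₁(gₜ₊₂)`, and chaining these "be the leader"
steps bounds `η Σₜ (⟨gₜ₊₁, xₜ⟩ + ⟨fₜ - gₜ₊₁, Mₜ⟩)` by `Φ_T(f*)` minus any lower bound of `R` on `F`. Since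
`⟨fₜ - f*, xₜ⟩ = ⟨fₜ - gₜ₊₁, xₜ - Mₜ⟩ + ⟨gₜ₊₁, xₜ⟩ + ⟨fₜ - gₜ₊₁, Mₜ⟩ - ⟨f*, xₜ⟩`, summing and dividing
by `η` gives the bound.
-/

open Finset

section

variable {ι : Type*} [Fintype ι]

def ftrlObjective (η : ℝ) (R : (ι → ℝ) → ℝ) (L p : ι → ℝ) : ℝ := η * (p ⬝ᵥ L) + R p

theorem ftrlObjective_add_le_of_isMinOn {F : Set (ι → ℝ)} {R : (ι → ℝ) → ℝ} {η : ℝ}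
    {L m x f g : ι → ℝ} (hf : IsMinOn (ftrlObjective η R (L + m)) F f) (hg : g ∈ F) :
    ftrlObjective η R L f + η * (g ⬝ᵥ x + (f - g) ⬝ᵥ m) ≤ ftrlObjective η R (L + x) g := by
  have key := isMinOn_iff.1 hf g hg
  simp only [ftrlObjective, dotProduct_add, sub_dotProduct] at key ⊢
  linarith

theorem add_sum_le_ftrlObjective {F : Set (ι → ℝ)} {R : (ι → ℝ) → ℝ} {η C : ℝ}
    (hC : ∀ p ∈ F, C ≤ R p) {x M f g : ℕ → ι → ℝ} {n : ℕ}
    (hf : ∀ t < n, f (t + 1) ∈ F ∧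
      IsMinOn (ftrlObjective η R ((∑ s ∈ Icc 1 t, x s) + M (t + 1))) F (f (t + 1)))
    (hg : ∀ t ∈ Icc 1 n, g (t + 1) ∈ F ∧
      IsMinOn (ftrlObjective η R (∑ s ∈ Icc 1 t, x s)) F (g (t + 1)))
    {p : ι → ℝ} (hp : p ∈ F) :
    C + η * ∑ t ∈ Icc 1 n, (g (t + 1) ⬝ᵥ x t + (f t - g (t + 1)) ⬝ᵥ M t)
      ≤ ftrlObjective η R (∑ s ∈ Icc 1 n, x s) p := by
  induction n generalizing p with
  | zero => simpa [ftrlObjective] using hC p hp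
  | succ n ih =>
    have hfn := hf n n.lt_succ_self
    have hgn := hg (n + 1) (by simp)
    have previous := ih (fun t ht => hf t (by omega))
      (fun t ht => hg t (by simp only [mem_Icc] at ht ⊢; omega)) hfn.1
    have step := ftrlObjective_add_le_of_isMinOn (x := x (n + 1)) hfn.2 hgn.1
    have leader := isMinOn_iff.1 hgn.2 p hp
    simp only [sum_Icc_succ_top (Nat.le_add_left 1 n)] at leader step ⊢
    simp only [ftrlObjective, dotProduct_add] at previous leader step ⊢
    linarith

theorem sum_dotProduct_sub_le {F : Set (ι → ℝ)} {R : (ι → ℝ) → ℝ} {η C : ℝ} (hη : 0 < η)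
    (hC : ∀ p ∈ F, C ≤ R p) {x M f g : ℕ → ι → ℝ} {T : ℕ}
    (hf : ∀ t < T, f (t + 1) ∈ F ∧
      IsMinOn (ftrlObjective η R ((∑ s ∈ Icc 1 t, x s) + M (t + 1))) F (f (t + 1)))
    (hg : ∀ t ∈ Icc 1 T, g (t + 1) ∈ F ∧
      IsMinOn (ftrlObjective η R (∑ s ∈ Icc 1 t, x s)) F (g (t + 1)))
    {p : ι → ℝ} (hp : p ∈ F) :
    ∑ t ∈ Icc 1 T, (f t - p) ⬝ᵥ x t
      ≤ ∑ t ∈ Icc 1 T, (f t - g (t + 1)) ⬝ᵥ (x t - M t) + η⁻¹ * (R p - C) := by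
  have leader := add_sum_le_ftrlObjective hC hf hg hp
  have split : ∑ t ∈ Icc 1 T, (f t - p) ⬝ᵥ x t
      = ∑ t ∈ Icc 1 T, (f t - g (t + 1)) ⬝ᵥ (x t - M t)
        + ∑ t ∈ Icc 1 T, (g (t + 1) ⬝ᵥ x t + (f t - g (t + 1)) ⬝ᵥ M t)
        - p ⬝ᵥ ∑ t ∈ Icc 1 T, x t := by
    rw [dotProduct_sum, ← sum_add_distrib, ← sum_sub_distrib]
    refine sum_congr rfl fun t _ => ?_
    simp only [sub_dotProduct, dotProduct_sub]
    ring
  have optimism_bound : ∑ t ∈ Icc 1 T, (g (t + 1) ⬝ᵥ x t + (f t - g (t + 1)) ⬝ᵥ M t)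
      ≤ p ⬝ᵥ ∑ t ∈ Icc 1 T, x t + η⁻¹ * (R p - C) := by
    rw [← mul_le_mul_iff_right₀ hη, mul_add, mul_inv_cancel_left₀ hη.ne']
    simp only [ftrlObjective] at leader
    linarith
  linarith

end

theorem stmt_2_general {d T : ℕ} (F : Set (Fin d → ℝ))
    (R : (Fin d → ℝ) → ℝ)
    (hRnonneg : ∀ p ∈ F, 0 ≤ R p)
    (η : ℝ) (hη : 0 < η)
    (x M : ℕ → (Fin d → ℝ)) (hM1 : M 1 = 0)
    (f g : ℕ → (Fin d → ℝ))
    (hf1 : f 1 ∈ F ∧ ∀ p ∈ F, R (f 1) ≤ R p)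
    (hf : ∀ t ∈ Icc 1 T, f (t + 1) ∈ F ∧ ∀ p ∈ F,
      η * (∑ i, f (t + 1) i * ((∑ s ∈ Icc 1 t, x s) i + M (t + 1) i)) + R (f (t + 1)) ≤
        η * (∑ i, p i * ((∑ s ∈ Icc 1 t, x s) i + M (t + 1) i)) + R p)
    (hg : ∀ t ∈ Icc 1 T, g (t + 1) ∈ F ∧ ∀ p ∈ F,
      η * (∑ i, g (t + 1) i * (∑ s ∈ Icc 1 t, x s) i) + R (g (t + 1)) ≤
        η * (∑ i, p i * (∑ s ∈ Icc 1 t, x s) i) + R p)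
    (fstar : Fin d → ℝ) (hfstar : fstar ∈ F) :
    ∑ t ∈ Icc 1 T, ∑ i, (f t i - fstar i) * x t i
      ≤ (∑ t ∈ Icc 1 T, ∑ i, (f t i - g (t + 1) i) * (x t i - M t i)) + η⁻¹ * R fstar := by
  have hf' : ∀ t < T, f (t + 1) ∈ F ∧
      IsMinOn (ftrlObjective η R ((∑ s ∈ Icc 1 t, x s) + M (t + 1))) F (f (t + 1)) := by
    rintro (_ | t) ht
    · refine ⟨hf1.1, isMinOn_iff.2 fun p hp => ?_⟩
      simpa [ftrlObjective, hM1] using hf1.2 p hp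
    · obtain ⟨hmem, hmin⟩ := hf (t + 1) (mem_Icc.2 ⟨Nat.le_add_left 1 t, ht.le⟩)
      exact ⟨hmem, isMinOn_iff.2 hmin⟩
  have hg' : ∀ t ∈ Icc 1 T, g (t + 1) ∈ F ∧
      IsMinOn (ftrlObjective η R (∑ s ∈ Icc 1 t, x s)) F (g (t + 1)) :=
    fun t ht => ⟨(hg t ht).1, isMinOn_iff.2 (hg t ht).2⟩
  have regret := sum_dotProduct_sub_le hη hRnonneg hf' hg' hfstar
  rw [sub_zero] at regret
  exact regret

/-- **Regret decomposition for Optimistic Follow the Regularized Leader.**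
Under the same setup, for every `f* ∈ F`:
`Σ_{t=1}^T ⟨f_t − f*, x_t⟩ ≤ Σ_{t=1}^T ⟨f_t − g_{t+1}, x_t − M_t⟩ + η⁻¹ R f*`. -/
theorem stmt_2 {d T : ℕ} (F : Set (Fin d → ℝ)) (hFconv : Convex ℝ F)
    (hFcomp : IsCompact F)
    (R : (Fin d → ℝ) → ℝ) (hRconv : ConvexOn ℝ Set.univ R)
    (hRnonneg : ∀ p ∈ F, 0 ≤ R p)
    (η : ℝ) (hη : 0 < η)
    (x M : ℕ → (Fin d → ℝ)) (hM1 : M 1 = 0)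
    (f g : ℕ → (Fin d → ℝ))
    (hf1 : f 1 ∈ F ∧ ∀ p ∈ F, R (f 1) ≤ R p) (hf1min : R (f 1) = 0)
    (hf : ∀ t ∈ Icc 1 T, f (t + 1) ∈ F ∧ ∀ p ∈ F,
      η * (∑ i, f (t + 1) i * ((∑ s ∈ Icc 1 t, x s) i + M (t + 1) i)) + R (f (t + 1)) ≤
        η * (∑ i, p i * ((∑ s ∈ Icc 1 t, x s) i + M (t + 1) i)) + R p)
    (hg : ∀ t ∈ Icc 1 T, g (t + 1) ∈ F ∧ ∀ p ∈ F,
      η * (∑ i, g (t + 1) i * (∑ s ∈ Icc 1 t, x s) i) + R (g (t + 1)) ≤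
        η * (∑ i, p i * (∑ s ∈ Icc 1 t, x s) i) + R p)
    (fstar : Fin d → ℝ) (hfstar : fstar ∈ F) :
    ∑ t ∈ Icc 1 T, ∑ i, (f t i - fstar i) * x t i
      ≤ (∑ t ∈ Icc 1 T, ∑ i, (f t i - g (t + 1) i) * (x t i - M t i)) + η⁻¹ * R fstar :=
  stmt_2_general F R hRnonneg η hη x M hM1 f g hf1 hf hg fstar hfstar
end

section
/- Let H be a real Hilbert space, F ⊆ H a nonempty convex compact set, and R : H → ℝ a differentiable function that is 1-strongly convex on F with respect to the norm of H. Define the Bregman divergence D_R(f, g) = R(f) − R(g) − ⟨∇R(g), f − g⟩. Let η > 0, let x_1,…,x_T ∈ H be arbitrary, M_1 = 0 and M_2,…,M_T ∈ H arbitrary. Define f_1 = g_1 = argmin_{g∈F} R(g), and for each t: g_{t+1} = argmin_{g∈F} [ η⟨g, x_t⟩ + D_R(g, g_t) ] and f_{t+1} = argmin_{f∈F} [ η⟨f, M_{t+1}⟩ + D_R(f, g_{t+1}) ] (assume these minimizers exist). Then for every f* ∈ F: Σ_{t=1}^T ⟨f_t, x_t⟩ − Σ_{t=1}^T ⟨f*,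 x_t⟩ ≤ η^{-1} R_max² + (η/2) Σ_{t=1}^T ‖x_t − M_t‖², where R_max² = max_{f∈F} R(f) − min_{f∈F} R(f). -/
/-!
By first-order optimality and the three-point identity for Bregman divergences, a mirror step `q`
from `c` along `y` satisfies `η ⟪q - p, y⟫ ≤ D(p, c) - D(p, q) - D(q, c)` for every `p ∈ F`.
Apply this to the hint step `f t` (tested at `g (t + 1)`) and to the loss step `g (t + 1)` (tested
at `f*`). The remaining cross term `η ⟪f t - g (t + 1), x t - M t⟫` is absorbed by Young's
inequality into `½ ‖f t - g (t + 1)‖² ≤ D(g (t + 1), f t)` (strong convexity) plus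
`η² / 2 ‖x t - M t‖²`. Summing over rounds, `D(f*, g t) - D(f*, g (t + 1))` telescopes to at most
`D(f*, g 1) ≤ R f* - R (g 1)`. Since `M 1 = 0`, `f 1 = g 1` is itself a hint step, so the first
round needs no special treatment.
-/

open Finset
open scoped RealInnerProductSpace

section FirstOrder

variable {E : Type*} [NormedAddCommGroup E] [NormedSpace ℝ E]
  {f : E → ℝ} {f' : StrongDual ℝ E} {s : Set E} {a b : E}

theorem IsMinOn.hasFDerivAt_nonneg (hs : Convex ℝ s) (hmin : IsMinOn f s a) (ha : a ∈ s)
    (hb : b ∈ s) (hf : HasFDerivAt f f' a) :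
    0 ≤ f' (b - a) :=
  hmin.localize.hasFDerivWithinAt_nonneg hf.hasFDerivWithinAt
    (sub_mem_posTangentConeAt_of_segment_subset (hs.segment_subset ha hb))

theorem ConvexOn.hasFDerivAt_le_sub (hf : ConvexOn ℝ s f) (ha : a ∈ s) (hb : b ∈ s)
    (hd : HasFDerivAt f f' b) :
    f' (a - b) ≤ f a - f b := by
  have hline := (hf.comp_affineMap (AffineMap.lineMap b a)).le_slope_of_hasDerivAt
    (x := 0) (y := 1) (by simpa using hb) (by simpa using ha) one_pos
    (hd.comp_hasDerivAt_of_eq (0 : ℝ) AffineMap.hasDerivAt_lineMap (by simp))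
  simpa [slope_def_field] using hline

end FirstOrder

theorem StrongConvexOn.hasFDerivAt_add_le_sub {F : Type*} [NormedAddCommGroup F]
    [InnerProductSpace ℝ F] {f : F → ℝ} {f' : StrongDual ℝ F} {s : Set F} {m : ℝ} {a b : F}
    (hf : StrongConvexOn s m f) (ha : a ∈ s) (hb : b ∈ s) (hd : HasFDerivAt f f' b) :
    f' (a - b) + m / 2 * ‖a - b‖ ^ 2 ≤ f a - f b := by
  have h := (strongConvexOn_iff_convex.mp hf).hasFDerivAt_le_sub ha hb
    (hd.sub (((hasFDerivAt_id b).norm_sq).const_mul (m / 2)))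
  simp only [sub_apply, smul_apply, ContinuousLinearMap.comp_apply, innerSL_apply_apply, id,
    ContinuousLinearMap.id_apply, smul_eq_mul, nsmul_eq_mul, Nat.cast_ofNat] at h
  rw [norm_sub_sq_real]
  rw [inner_sub_right, real_inner_self_eq_norm_sq, real_inner_comm] at h
  linarith

theorem mul_inner_le_half_sq_add {H : Type*} [NormedAddCommGroup H] [InnerProductSpace ℝ H]
    (η : ℝ) (u v : H) :
    η * ⟪u, v⟫ ≤ 1 / 2 * ‖u‖ ^ 2 + η ^ 2 / 2 * ‖v‖ ^ 2 := by
  have h := norm_sub_sq_real u (η • v)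
  rw [real_inner_smul_right, norm_smul, mul_pow, Real.norm_eq_abs, sq_abs] at h
  nlinarith [sq_nonneg ‖u - η • v‖]

theorem Finset.sum_Icc_sub_succ {G : Type*} [AddCommGroup G] (φ : ℕ → G) (n : ℕ) :
    ∑ t ∈ Icc 1 n, (φ t - φ (t + 1)) = φ 1 - φ (n + 1) := by
  induction n with
  | zero => simp
  | succ n ih => rw [sum_Icc_succ_top (by omega), ih]; abel

section Bregman

variable {H : Type*} [NormedAddCommGroup H] [InnerProductSpace ℝ H] [CompleteSpace H]
  {R : H → ℝ} {F : Set H} {η : ℝ} {y c q p : H}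

noncomputable def bregmanDivergence (R : H → ℝ) (p q : H) : ℝ :=
  R p - R q - ⟪gradient R q, p - q⟫

local notation "D" => bregmanDivergence R

theorem bregmanDivergence_self (p : H) : D p p = 0 := by
  simp [bregmanDivergence]

theorem inner_gradient_sub_gradient_eq (p q c : H) :
    ⟪gradient R q - gradient R c, p - q⟫ = D p c - D p q - D q c := by
  simp only [bregmanDivergence, inner_sub_left, inner_sub_right]
  ring

theorem StrongConvexOn.half_sq_le_bregmanDivergence (hR : StrongConvexOn F 1 R)
    (hd : DifferentiableAt ℝ R q) (hp : p ∈ F) (hq : q ∈ F) :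
    1 / 2 * ‖p - q‖ ^ 2 ≤ D p q := by
  have h := hR.hasFDerivAt_add_le_sub hp hq hd.hasGradientAt.hasFDerivAt
  rw [InnerProductSpace.toDual_apply_apply] at h
  rw [bregmanDivergence]
  linarith

theorem StrongConvexOn.bregmanDivergence_nonneg (hR : StrongConvexOn F 1 R)
    (hd : DifferentiableAt ℝ R q) (hp : p ∈ F) (hq : q ∈ F) :
    0 ≤ D p q :=
  (by positivity : (0 : ℝ) ≤ 1 / 2 * ‖p - q‖ ^ 2).trans (hR.half_sq_le_bregmanDivergence hd hp hq)

theorem bregmanDivergence_le_of_isMinOn (hF : Convex ℝ F) (hmin : IsMinOn R F q)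
    (hd : DifferentiableAt ℝ R q) (hp : p ∈ F) (hq : q ∈ F) :
    D p q ≤ R p - R q := by
  have h := hmin.hasFDerivAt_nonneg hF hq hp hd.hasGradientAt.hasFDerivAt
  rw [InnerProductSpace.toDual_apply_apply] at h
  rw [bregmanDivergence]
  linarith

variable (R F η) in
def IsMirrorStep (y c q : H) : Prop :=
  q ∈ F ∧ ∀ p ∈ F, η * ⟪q, y⟫ + D q c ≤ η * ⟪p, y⟫ + D p c

theorem isMirrorStep_zero_self (hR : StrongConvexOn F 1 R) (hd : DifferentiableAt ℝ R c)
    (hc : c ∈ F) : IsMirrorStep R F η 0 c c := by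
  refine ⟨hc, fun p hp => ?_⟩
  simpa [bregmanDivergence_self] using hR.bregmanDivergence_nonneg hd hp hc

theorem IsMirrorStep.mul_inner_sub_le (hF : Convex ℝ F) (hd : DifferentiableAt ℝ R q)
    (h : IsMirrorStep R F η y c q) (hp : p ∈ F) :
    η * ⟪q - p, y⟫ ≤ D p c - D p q - D q c := by
  have hderiv : HasFDerivAt (fun u => η * ⟪y, u⟫ + D u c)
      (η • innerSL ℝ y + (InnerProductSpace.toDual ℝ H (gradient R q) - innerSL ℝ (gradient R c)))
      q := by
    have hlin : HasFDerivAt (fun u => ⟪gradient R c, u - c⟫) (innerSL ℝ (gradient R c)) q := by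
      simpa only [innerSL_apply_apply, ← inner_sub_right] using
        ((innerSL ℝ (gradient R c)).hasFDerivAt (x := q)).sub_const ⟪gradient R c, c⟫
    exact ((innerSL ℝ y).hasFDerivAt.const_mul η).add
      ((hd.hasGradientAt.hasFDerivAt.sub_const (R c)).sub hlin)
  have hmin : IsMinOn (fun u => η * ⟪y, u⟫ + D u c) F q :=
    isMinOn_iff.mpr fun u hu => by simpa only [real_inner_comm y] using h.2 u hu
  have h0 := hmin.hasFDerivAt_nonneg hF h.1 hp hderiv
  simp only [add_apply, sub_apply, smul_apply, innerSL_apply_apply, smul_eq_mul,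
    InnerProductSpace.toDual_apply_apply] at h0
  have h3 := inner_gradient_sub_gradient_eq (R := R) p q c
  rw [inner_sub_left] at h3
  rw [← neg_sub p q, inner_neg_left, real_inner_comm y]
  linarith

/-- In round `t`: `c = g t`, `q = f t`, `q' = g (t + 1)`, `m = M t`, `x = x t`. -/
theorem IsMirrorStep.optimistic_round_le (hF : Convex ℝ F) (hR : StrongConvexOn F 1 R)
    (hd : Differentiable ℝ R) {m x q' : H} (hc : c ∈ F)
    (hq : IsMirrorStep R F η m c q) (hq' : IsMirrorStep R F η x c q') (hp : p ∈ F) :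
    η * ⟪q - p, x⟫ ≤ D p c - D p q' + η ^ 2 / 2 * ‖x - m‖ ^ 2 := by
  have hhint := hq.mul_inner_sub_le hF (hd q) hq'.1
  have hloss := hq'.mul_inner_sub_le hF (hd q') hp
  have hclose := hR.half_sq_le_bregmanDivergence (hd q) hq'.1 hq.1
  have hpos := hR.bregmanDivergence_nonneg (hd c) hq.1 hc
  have hyoung := mul_inner_le_half_sq_add η (q - q') (x - m)
  have hsplit : ⟪q - p, x⟫ = ⟪q - q', x - m⟫ + ⟪q - q', m⟫ + ⟪q' - p, x⟫ := by
    simp only [inner_sub_left, inner_sub_right]; ring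
  rw [norm_sub_rev] at hyoung
  rw [hsplit]
  linarith

end Bregman

theorem stmt_3_general {H : Type*} [NormedAddCommGroup H] [InnerProductSpace ℝ H] [CompleteSpace H]
    (F : Set H) (hFconv : Convex ℝ F) (hFcomp : IsCompact F)
    (R : H → ℝ) (hRdiff : Differentiable ℝ R) (hRsc : StrongConvexOn F 1 R)
    (η : ℝ) (hη : 0 < η) (T : ℕ)
    (x M : ℕ → H) (hM1 : M 1 = 0)
    (f g : ℕ → H)
    (hfg1 : f 1 = g 1) (hg1 : g 1 ∈ F ∧ ∀ p ∈ F, R (g 1) ≤ R p)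
    (hg : ∀ t ∈ Icc 1 T, g (t + 1) ∈ F ∧ ∀ p ∈ F,
      η * ⟪g (t + 1), x t⟫
          + (R (g (t + 1)) - R (g t) - ⟪gradient R (g t), g (t + 1) - g t⟫)
        ≤ η * ⟪p, x t⟫ + (R p - R (g t) - ⟪gradient R (g t), p - g t⟫))
    (hf : ∀ t ∈ Icc 1 T, f (t + 1) ∈ F ∧ ∀ p ∈ F,
      η * ⟪f (t + 1), M (t + 1)⟫
          + (R (f (t + 1)) - R (g (t + 1)) - ⟪gradient R (g (t + 1)), f (t + 1) - g (t + 1)⟫)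
        ≤ η * ⟪p, M (t + 1)⟫ + (R p - R (g (t + 1)) - ⟪gradient R (g (t + 1)), p - g (t + 1)⟫))
    (fstar : H) (hfstar : fstar ∈ F) :
    (∑ t ∈ Icc 1 T, ⟪f t, x t⟫) - (∑ t ∈ Icc 1 T, ⟪fstar, x t⟫)
      ≤ η⁻¹ * (sSup (R '' F) - sInf (R '' F))
        + η / 2 * ∑ t ∈ Icc 1 T, ‖x t - M t‖ ^ 2 := by
  have hgstep : ∀ t ∈ Icc 1 T, IsMirrorStep R F η (x t) (g t) (g (t + 1)) := hg
  have hgF : ∀ t ∈ Icc 1 (T + 1), g t ∈ F := by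
    rintro (_ | _ | t) ht
    · simp at ht
    · exact hg1.1
    · exact (hgstep (t + 1) (by simp at ht ⊢; omega)).1
  have hfstep : ∀ t ∈ Icc 1 T, IsMirrorStep R F η (M t) (g t) (f t) := by
    rintro (_ | _ | t) ht
    · simp at ht
    · rw [hM1, hfg1]; exact isMirrorStep_zero_self hRsc (hRdiff _) hg1.1
    · exact hf (t + 1) (by simp at ht ⊢; omega)
  have hround : ∀ t ∈ Icc 1 T, η * ⟪f t - fstar, x t⟫ ≤
      (bregmanDivergence R fstar (g t) - bregmanDivergence R fstar (g (t + 1)))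
        + η ^ 2 / 2 * ‖x t - M t‖ ^ 2 := fun t ht =>
    (hfstep t ht).optimistic_round_le hFconv hRsc hRdiff
      (hgF t (Icc_subset_Icc_right T.le_succ ht)) (hgstep t ht) hfstar
  have hsum := sum_le_sum hround
  rw [sum_add_distrib, sum_Icc_sub_succ, ← mul_sum, ← mul_sum] at hsum
  have hlast : 0 ≤ bregmanDivergence R fstar (g (T + 1)) :=
    hRsc.bregmanDivergence_nonneg (hRdiff _) hfstar (hgF (T + 1) (by simp))
  have hfirst : bregmanDivergence R fstar (g 1) ≤ sSup (R '' F) - sInf (R '' F) := by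
    have hbdd := hFcomp.image hRdiff.continuous
    calc bregmanDivergence R fstar (g 1) ≤ R fstar - R (g 1) :=
          bregmanDivergence_le_of_isMinOn hFconv (isMinOn_iff.mpr hg1.2) (hRdiff _) hfstar hg1.1
      _ ≤ sSup (R '' F) - sInf (R '' F) :=
          sub_le_sub (le_csSup hbdd.bddAbove ⟨fstar, hfstar, rfl⟩)
            (csInf_le hbdd.bddBelow ⟨g 1, hg1.1, rfl⟩)
  simp only [inner_sub_left, sum_sub_distrib] at hsum
  rw [← mul_le_mul_iff_right₀ hη, mul_add, ← mul_assoc, mul_inv_cancel₀ hη.ne', one_mul]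
  linarith

/-- **Regret bound for the Optimistic Mirror Descent algorithm.**
`H` a real Hilbert space, `F ⊆ H` nonempty convex compact, `R : H → ℝ` differentiable
and 1-strongly convex on `F`; Bregman divergence
`D_R(f,g) = R f − R g − ⟨∇R g, f − g⟩`.  With `M₁ = 0`, arbitrary `x_t, M_t ∈ H`,
`f₁ = g₁ = argmin_F R`, `g_{t+1} = argmin_{g∈F} η⟨g,x_t⟩ + D_R(g,g_t)` and
`f_{t+1} = argmin_{f∈F} η⟨f,M_{t+1}⟩ + D_R(f,g_{t+1})`, for every `f* ∈ F`:
`Σ⟨f_t,x_t⟩ − Σ⟨f*,x_t⟩ ≤ η⁻¹ R_max² + (η/2) Σ ‖x_t − M_t‖²`, where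
`R_max² = max_{f∈F} R f − min_{f∈F} R f`. -/
theorem stmt_3 {H : Type*} [NormedAddCommGroup H] [InnerProductSpace ℝ H] [CompleteSpace H]
    (F : Set H) (hFne : F.Nonempty) (hFconv : Convex ℝ F) (hFcomp : IsCompact F)
    (R : H → ℝ) (hRdiff : Differentiable ℝ R) (hRsc : StrongConvexOn F 1 R)
    (η : ℝ) (hη : 0 < η) (T : ℕ)
    (x M : ℕ → H) (hM1 : M 1 = 0)
    (f g : ℕ → H)
    (hfg1 : f 1 = g 1) (hg1 : g 1 ∈ F ∧ ∀ p ∈ F, R (g 1) ≤ R p)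
    (hg : ∀ t ∈ Icc 1 T, g (t + 1) ∈ F ∧ ∀ p ∈ F,
      η * ⟪g (t + 1), x t⟫
          + (R (g (t + 1)) - R (g t) - ⟪gradient R (g t), g (t + 1) - g t⟫)
        ≤ η * ⟪p, x t⟫ + (R p - R (g t) - ⟪gradient R (g t), p - g t⟫))
    (hf : ∀ t ∈ Icc 1 T, f (t + 1) ∈ F ∧ ∀ p ∈ F,
      η * ⟪f (t + 1), M (t + 1)⟫
          + (R (f (t + 1)) - R (g (t + 1)) - ⟪gradient R (g (t + 1)), f (t + 1) - g (t + 1)⟫)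
        ≤ η * ⟪p, M (t + 1)⟫ + (R p - R (g (t + 1)) - ⟪gradient R (g (t + 1)), p - g (t + 1)⟫))
    (fstar : H) (hfstar : fstar ∈ F) :
    (∑ t ∈ Icc 1 T, ⟪f t, x t⟫) - (∑ t ∈ Icc 1 T, ⟪fstar, x t⟫)
      ≤ η⁻¹ * (sSup (R '' F) - sInf (R '' F))
        + η / 2 * ∑ t ∈ Icc 1 T, ‖x t - M t‖ ^ 2 :=
  stmt_3_general F hFconv hFcomp R hRdiff hRsc η hη T x M hM1 f g hfg1 hg1 hg hf fstar hfstar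
end

section
/- Let d ≥ 1, η > 0, x_1,…,x_T ∈ ℝ^d, M_1 = 0 and M_2,…,M_T ∈ ℝ^d. Define for each t ∈ [T] and i ∈ [d] the exponential weights iterates f_t(i) = exp(−η Σ_{s=1}^{t−1} x_s(i) − η M_t(i)) / Σ_{j=1}^{d} exp(−η Σ_{s=1}^{t−1} x_s(j) − η M_t(j)), and the local dual norm ‖x‖*_t = √(Σ_{i=1}^d f_t(i) x(i)²). If η ‖x_t − M_t‖_∞ ≤ 1/4 for every t ∈ [T], then for every f* in the probability simplex Δ_d = { f ∈ ℝ^d : f(i) ≥ 0, Σ_i f(i) = 1 }: Σ_{t=1}^T ⟨f_t − f*, x_t⟩ ≤ 2η Σ_{t=1}^T (‖x_t − M_t‖*_t)² + (log d)/η. -/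
/-!
Write `L_t = Σ_{s<t} x_s` and `Φ_t = log Σ_i exp(-η L_t(i))`. Since `f_t` is the softmax of
`-η (L_t + M_t)`, the increment `Φ_{t+1} - Φ_t` is `log E_{f_t} exp(-η (x_t - M_t))` minus
`log E_{f_t} exp(η M_t)`. The first term is at most `-η ⟨f_t, x_t - M_t⟩ + η² (‖x_t - M_t‖*_t)²`
because `exp(-y) ≤ 1 - y + y²` for `|y| ≤ 1`, the second is at least `η ⟨f_t, M_t⟩` by Jensen.
Hence `η ⟨f_t, x_t⟩ ≤ Φ_t - Φ_{t+1} + η² (‖x_t - M_t‖*_t)²`, which telescopes; finally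
`Φ_1 = log d` and `Φ_{T+1} ≥ -η ⟨f*, L_{T+1}⟩`.
-/

open Finset Real

section LogSumExp

variable {ι : Type*} [Fintype ι]

noncomputable def logSumExp (a : ι → ℝ) : ℝ := log (∑ i, exp (a i))

noncomputable def softmax (a : ι → ℝ) (i : ι) : ℝ := exp (a i) / ∑ j, exp (a j)

lemma sum_exp_pos [Nonempty ι] (a : ι → ℝ) : 0 < ∑ i, exp (a i) :=
  sum_pos (fun _ _ => exp_pos _) univ_nonempty

lemma softmax_pos [Nonempty ι] (a : ι → ℝ) (i : ι) : 0 < softmax a i :=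
  div_pos (exp_pos _) (sum_exp_pos a)

lemma sum_softmax [Nonempty ι] (a : ι → ℝ) : ∑ i, softmax a i = 1 := by
  simp only [softmax, ← sum_div, div_self (sum_exp_pos a).ne']

lemma logSumExp_zero : logSumExp (0 : ι → ℝ) = log (Fintype.card ι) := by
  simp [logSumExp]

lemma log_sum_softmax_mul_exp [Nonempty ι] (a b : ι → ℝ) :
    log (∑ i, softmax a i * exp (b i)) = logSumExp (a + b) - logSumExp a := by
  have hsum : ∑ i, softmax a i * exp (b i) = (∑ i, exp ((a + b) i)) / ∑ i, exp (a i) := by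
    simp only [softmax, Pi.add_apply, exp_add, sum_div]
    exact sum_congr rfl fun i _ => div_mul_eq_mul_div _ _ _
  rw [hsum, log_div (sum_exp_pos _).ne' (sum_exp_pos _).ne', logSumExp, logSumExp]

end LogSumExp

section WeightedSums

variable {ι : Type*} [Fintype ι] {p : ι → ℝ}

lemma exp_sum_mul_le_sum_mul_exp (hp : ∀ i, 0 ≤ p i) (hp1 : ∑ i, p i = 1) (z : ι → ℝ) :
    exp (∑ i, p i * z i) ≤ ∑ i, p i * exp (z i) :=
  convexOn_exp.map_sum_le (fun i _ => hp i) hp1 (fun i _ => Set.mem_univ (z i))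

lemma sum_mul_le_log_sum_mul_exp (hp : ∀ i, 0 ≤ p i) (hp1 : ∑ i, p i = 1) (z : ι → ℝ) :
    ∑ i, p i * z i ≤ log (∑ i, p i * exp (z i)) :=
  have hjensen := exp_sum_mul_le_sum_mul_exp hp hp1 z
  (le_log_iff_exp_le ((exp_pos _).trans_le hjensen)).2 hjensen

lemma sum_mul_le_logSumExp (hp : ∀ i, 0 ≤ p i) (hp1 : ∑ i, p i = 1) (a : ι → ℝ) :
    ∑ i, p i * a i ≤ logSumExp a := by
  have hp_le_one : ∀ i, p i ≤ 1 := fun i =>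
    hp1 ▸ single_le_sum (fun j _ => hp j) (mem_univ i)
  have hle : exp (∑ i, p i * a i) ≤ ∑ i, exp (a i) :=
    (exp_sum_mul_le_sum_mul_exp hp hp1 a).trans <| sum_le_sum fun i _ =>
      mul_le_of_le_one_left (exp_pos _).le (hp_le_one i)
  exact (le_log_iff_exp_le ((exp_pos _).trans_le hle)).2 hle

lemma log_sum_mul_exp_neg_le (hp : ∀ i, 0 ≤ p i) (hp1 : ∑ i, p i = 1) {y : ι → ℝ}
    (hy : ∀ i, |y i| ≤ 1) :
    log (∑ i, p i * exp (-y i)) ≤ -∑ i, p i * y i + ∑ i, p i * y i ^ 2 := by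
  have hexp : ∀ i, exp (-y i) ≤ 1 - y i + y i ^ 2 := fun i => by
    have h := (abs_le.1 (abs_exp_sub_one_sub_id_le (x := -y i) (by rw [abs_neg]; exact hy i))).2
    rw [neg_sq] at h
    linarith
  have hle : ∑ i, p i * exp (-y i) ≤ 1 - ∑ i, p i * y i + ∑ i, p i * y i ^ 2 := calc
    ∑ i, p i * exp (-y i) ≤ ∑ i, p i * (1 - y i + y i ^ 2) :=
      sum_le_sum fun i _ => mul_le_mul_of_nonneg_left (hexp i) (hp i)
    _ = 1 - ∑ i, p i * y i + ∑ i, p i * y i ^ 2 := by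
      simp only [mul_add, mul_sub, mul_one, sum_add_distrib, sum_sub_distrib, hp1]
  have hpos : 0 < ∑ i, p i * exp (-y i) :=
    (exp_pos _).trans_le (exp_sum_mul_le_sum_mul_exp hp hp1 _)
  linarith [log_le_sub_one_of_pos hpos]

end WeightedSums

section OptimisticExpWeights

variable {ι : Type*} [Fintype ι] [Nonempty ι]

lemma mul_sum_softmax_mul_le_logSumExp_sub (η : ℝ) (L M x : ι → ℝ) (hxM : ∀ i, |η * (x i - M i)| ≤ 1) :
    η * ∑ i, softmax (-η • (L + M)) i * x i
      ≤ logSumExp (-η • L) - logSumExp (-η • (L + x))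
        + η ^ 2 * ∑ i, softmax (-η • (L + M)) i * (x i - M i) ^ 2 := by
  set a := -η • (L + M)
  set p := softmax a
  have hp : ∀ i, 0 ≤ p i := fun i => (softmax_pos a i).le
  have hp1 : ∑ i, p i = 1 := sum_softmax a
  have hnext : log (∑ i, p i * exp (-(η * (x i - M i))))
      = logSumExp (-η • (L + x)) - logSumExp a := by
    rw [log_sum_softmax_mul_exp]
    congr 2
    ext i
    simp only [a, Pi.add_apply, Pi.smul_apply, smul_eq_mul]
    ring
  have hcur : log (∑ i, p i * exp (η * M i)) = logSumExp (-η • L) - logSumExp a := by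
    rw [log_sum_softmax_mul_exp]
    congr 2
    ext i
    simp only [a, Pi.add_apply, Pi.smul_apply, smul_eq_mul]
    ring
  have hupper := log_sum_mul_exp_neg_le hp hp1 hxM
  have hlower := sum_mul_le_log_sum_mul_exp hp hp1 (fun i => η * M i)
  have hlin : ∑ i, p i * (η * (x i - M i)) = η * ∑ i, p i * x i - ∑ i, p i * (η * M i) := by
    simp only [mul_sum, ← sum_sub_distrib]
    exact sum_congr rfl fun i _ => by ring
  have hquad : ∑ i, p i * (η * (x i - M i)) ^ 2 = η ^ 2 * ∑ i, p i * (x i - M i) ^ 2 := by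
    simp only [mul_sum]
    exact sum_congr rfl fun i _ => by ring
  linarith

noncomputable def optimisticWeights (η : ℝ) (x M : ℕ → ι → ℝ) (t : ℕ) : ι → ℝ :=
  softmax (-η • (∑ s ∈ Ico 1 t, x s + M t))

theorem optimisticWeights_regret_le {η : ℝ} (hη : 0 < η) (T : ℕ) (x M : ℕ → ι → ℝ)
    (hsmall : ∀ t ∈ Icc 1 T, ∀ i, |η * (x t i - M t i)| ≤ 1)
    (p : ι → ℝ) (hp : ∀ i, 0 ≤ p i) (hp1 : ∑ i, p i = 1) :
    ∑ t ∈ Icc 1 T, ∑ i, (optimisticWeights η x M t i - p i) * x t i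
      ≤ η * ∑ t ∈ Icc 1 T, ∑ i, optimisticWeights η x M t i * (x t i - M t i) ^ 2
        + log (Fintype.card ι) / η := by
  set L : ℕ → ι → ℝ := fun t => ∑ s ∈ Ico 1 t, x s
  set Φ : ℕ → ℝ := fun t => logSumExp (-η • L t)
  set Q : ℕ → ℝ := fun t => ∑ i, optimisticWeights η x M t i * (x t i - M t i) ^ 2
  have hstep : ∀ t ∈ Icc 1 T,
      η * ∑ i, optimisticWeights η x M t i * x t i ≤ Φ t - Φ (t + 1) + η ^ 2 * Q t := by
    intro t ht
    have hL : L (t + 1) = L t + x t := sum_Ico_succ_top (mem_Icc.1 ht).1 x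
    rw [show Φ (t + 1) = logSumExp (-η • (L t + x t)) by simp only [Φ, hL]]
    exact mul_sum_softmax_mul_le_logSumExp_sub η (L t) (M t) (x t) (hsmall t ht)
  have htelescope : ∑ t ∈ Icc 1 T, (Φ t - Φ (t + 1)) = Φ 1 - Φ (T + 1) := by
    rw [← Ico_add_one_right_eq_Icc, ← neg_sub, ← sum_Ico_sub Φ (by omega : 1 ≤ T + 1)]
    simp only [← sum_neg_distrib, neg_sub]
  have hΦ1 : Φ 1 = log (Fintype.card ι) := by
    simp only [Φ, L, Ico_self, sum_empty, smul_zero, logSumExp_zero]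
  have hΦlast : -η * ∑ i, p i * L (T + 1) i ≤ Φ (T + 1) := by
    refine le_trans (le_of_eq ?_) (sum_mul_le_logSumExp hp hp1 _)
    simp only [mul_sum, Pi.smul_apply, smul_eq_mul]
    exact sum_congr rfl fun i _ => by ring
  have hcomparator : ∑ t ∈ Icc 1 T, ∑ i, p i * x t i = ∑ i, p i * L (T + 1) i := by
    simp only [L, Ico_add_one_right_eq_Icc, Finset.sum_apply, mul_sum]
    exact sum_comm
  have hsum := sum_le_sum hstep
  rw [← mul_sum, sum_add_distrib, htelescope, ← mul_sum] at hsum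
  simp only [sub_mul, sum_sub_distrib]
  refine le_of_mul_le_mul_left ?_ hη
  rw [mul_sub, mul_add, mul_div_cancel₀ _ hη.ne', hcomparator, ← mul_assoc, ← sq]
  linarith

end OptimisticExpWeights

theorem stmt_4_general {d : ℕ} (hd : 1 ≤ d) (η : ℝ) (hη : 0 < η) (T : ℕ)
    (x M : ℕ → (Fin d → ℝ))
    (f : ℕ → Fin d → ℝ)
    (hf : ∀ t, ∀ i, f t i =
      Real.exp (-η * (∑ s ∈ Ico 1 t, x s i) - η * M t i) /
        ∑ j, Real.exp (-η * (∑ s ∈ Ico 1 t, x s j) - η * M t j))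
    (hsmall : ∀ t ∈ Icc 1 T, η * ‖x t - M t‖ ≤ 1 / 4)
    (fstar : Fin d → ℝ) (hfstar : (∀ i, 0 ≤ fstar i) ∧ ∑ i, fstar i = 1) :
    ∑ t ∈ Icc 1 T, (∑ i, (f t i - fstar i) * x t i)
      ≤ 2 * η * ∑ t ∈ Icc 1 T, Real.sqrt (∑ i, f t i * (x t i - M t i) ^ 2) ^ 2
        + Real.log d / η := by
  have : Nonempty (Fin d) := ⟨⟨0, hd⟩⟩
  have hf_eq : f = optimisticWeights η x M := by
    ext t i
    simp only [hf, optimisticWeights, softmax, Pi.smul_apply, Pi.add_apply, Finset.sum_apply,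
      smul_eq_mul, mul_add, ← sub_eq_add_neg, neg_mul]
  have habs : ∀ t ∈ Icc 1 T, ∀ i, |η * (x t i - M t i)| ≤ 1 := fun t ht i => calc
    |η * (x t i - M t i)| = η * ‖(x t - M t) i‖ := by
      rw [abs_mul, abs_of_pos hη, Real.norm_eq_abs, Pi.sub_apply]
    _ ≤ η * ‖x t - M t‖ := mul_le_mul_of_nonneg_left (norm_le_pi_norm _ i) hη.le
    _ ≤ 1 := (hsmall t ht).trans (by norm_num)
  have hregret := optimisticWeights_regret_le hη T x M habs fstar hfstar.1 hfstar.2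
  rw [Fintype.card_fin, ← hf_eq] at hregret
  have hQ : ∀ t, 0 ≤ ∑ i, f t i * (x t i - M t i) ^ 2 := fun t =>
    sum_nonneg fun i _ => mul_nonneg (by rw [hf_eq]; exact (softmax_pos _ i).le) (sq_nonneg _)
  simp only [sq_sqrt (hQ _)]
  nlinarith [sum_nonneg fun t (_ : t ∈ Icc 1 T) => hQ t]

/-- **Local-norm regret bound for optimistic exponential weights on the simplex.**
With `f_t(i) = exp(−η Σ_{s<t} x_s(i) − η M_t(i)) / Σ_j exp(−η Σ_{s<t} x_s(j) − η M_t(j))`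
and local dual norms `‖v‖*_t = √(Σ_i f_t(i) v(i)²)`, if `η‖x_t − M_t‖_∞ ≤ 1/4` for every
`t ∈ [T]` (the norm on `Fin d → ℝ` is the sup norm), then for every `f*` in the
probability simplex:
`Σ_t ⟨f_t − f*, x_t⟩ ≤ 2η Σ_t (‖x_t − M_t‖*_t)² + (log d)/η`. -/
theorem stmt_4 {d : ℕ} (hd : 1 ≤ d) (η : ℝ) (hη : 0 < η) (T : ℕ)
    (x M : ℕ → (Fin d → ℝ)) (hM1 : M 1 = 0)
    (f : ℕ → Fin d → ℝ)
    (hf : ∀ t, ∀ i, f t i =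
      Real.exp (-η * (∑ s ∈ Ico 1 t, x s i) - η * M t i) /
        ∑ j, Real.exp (-η * (∑ s ∈ Ico 1 t, x s j) - η * M t j))
    (hsmall : ∀ t ∈ Icc 1 T, η * ‖x t - M t‖ ≤ 1 / 4)
    (fstar : Fin d → ℝ) (hfstar : (∀ i, 0 ≤ fstar i) ∧ ∑ i, fstar i = 1) :
    ∑ t ∈ Icc 1 T, (∑ i, (f t i - fstar i) * x t i)
      ≤ 2 * η * ∑ t ∈ Icc 1 T, Real.sqrt (∑ i, f t i * (x t i - M t i) ^ 2) ^ 2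
        + Real.log d / η :=
  stmt_4_general hd η hη T x M f hf hsmall fstar hfstar
end

section
/- Let d ≥ 1, η > 0, x_1,…,x_T ∈ ℝ^d, M_1 = 0, M_2,…,M_T ∈ ℝ^d. Define f_t(i) = exp(−η Σ_{s=1}^{t−1} x_s(i) − η M_t(i)) / Σ_{j} exp(−η Σ_{s=1}^{t−1} x_s(j) − η M_t(j)) and g_{t+1}(i) = exp(−η Σ_{s=1}^{t} x_s(i)) / Σ_{j} exp(−η Σ_{s=1}^{t} x_s(j)). Define the local norm ‖v‖_t = √(Σ_{i=1}^d v(i)²/f_t(i)) and local dual norm ‖x‖*_t = √(Σ_{i=1}^d f_t(i) x(i)²). If η ‖x_t − M_t‖_∞ ≤ 1/4, then ‖f_t − g_{t+1}‖_t ≤ 2η ‖x_t − M_t‖*_t. -/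
open Finset

/-- Variance is at most second moment for a probability vector. -/
lemma var_le_aux {d : ℕ} (w c : Fin d → ℝ) (hsum : ∑ i, w i = 1) :
    ∑ i, w i * (c i - ∑ j, w j * c j) ^ 2 ≤ ∑ i, w i * c i ^ 2 := by
  set m := ∑ j, w j * c j with hm
  have expand : ∑ i, w i * (c i - m) ^ 2
      = (∑ i, w i * c i ^ 2) - 2 * m * (∑ i, w i * c i) + m ^ 2 * (∑ i, w i) := by
    have key : ∀ i, w i * (c i - m) ^ 2
        = w i * c i ^ 2 - 2 * m * (w i * c i) + m ^ 2 * w i := fun i => by ring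
    calc ∑ i, w i * (c i - m) ^ 2
        = ∑ i, (w i * c i ^ 2 - 2 * m * (w i * c i) + m ^ 2 * w i) :=
          Finset.sum_congr rfl fun i _ => key i
      _ = (∑ i, w i * c i ^ 2) - 2 * m * (∑ i, w i * c i) + m ^ 2 * (∑ i, w i) := by
          rw [Finset.sum_add_distrib, Finset.sum_sub_distrib, ← Finset.mul_sum,
            ← Finset.mul_sum]
  rw [expand, hsum, ← hm]
  nlinarith [sq_nonneg m]

set_option maxHeartbeats 1000000 in
/-- **Local-norm stability of optimistic exponential weights.**
`f` is the optimistic exponential-weights iterate at time `t` (using the hint `M_t`),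
`g` is the unhinted iterate after observing `x_t`.  With the local norm
`‖v‖_t = √(Σ_i v(i)²/f(i))` and local dual norm `‖v‖*_t = √(Σ_i f(i) v(i)²)`,
if `η‖x_t − M_t‖_∞ ≤ 1/4` (sup norm on `Fin d → ℝ`), then
`‖f − g‖_t ≤ 2η ‖x_t − M_t‖*_t`. -/
theorem stmt_5 {d : ℕ} (hd : 1 ≤ d) (η : ℝ) (hη : 0 < η)
    (x M : ℕ → (Fin d → ℝ)) (hM1 : M 1 = 0)
    (t : ℕ) (ht : 1 ≤ t)
    (f g : Fin d → ℝ)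
    (hf : ∀ i, f i =
      Real.exp (-η * (∑ s ∈ Ico 1 t, x s i) - η * M t i) /
        ∑ j, Real.exp (-η * (∑ s ∈ Ico 1 t, x s j) - η * M t j))
    (hg : ∀ i, g i =
      Real.exp (-η * (∑ s ∈ Icc 1 t, x s i)) /
        ∑ j, Real.exp (-η * (∑ s ∈ Icc 1 t, x s j)))
    (hsmall : η * ‖x t - M t‖ ≤ 1 / 4) :
    Real.sqrt (∑ i, (f i - g i) ^ 2 / f i)
      ≤ 2 * η * Real.sqrt (∑ i, f i * (x t i - M t i) ^ 2) := by
  haveI : NeZero d := ⟨by omega⟩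
  set c : Fin d → ℝ := fun i => η * (x t i - M t i) with hcdef
  -- bound on c
  have hcb : ∀ i, |c i| ≤ 1 / 4 := by
    intro i
    have h1 : |x t i - M t i| ≤ ‖x t - M t‖ := by
      have h := norm_le_pi_norm (x t - M t) i
      simpa [Real.norm_eq_abs] using h
    have : |c i| = η * |x t i - M t i| := by
      simp only [hcdef, abs_mul, abs_of_pos hη]
    rw [this]
    calc η * |x t i - M t i| ≤ η * ‖x t - M t‖ := by
          exact mul_le_mul_of_nonneg_left h1 hη.le
      _ ≤ 1 / 4 := hsmall
  clear_value c
  -- setup of the weights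
  set a : Fin d → ℝ := fun i =>
    Real.exp (-η * (∑ s ∈ Ico 1 t, x s i) - η * M t i) with hadef
  set A : ℝ := ∑ j, a j with hAdef
  have hA : 0 < A :=
    Finset.sum_pos (fun j _ => Real.exp_pos _) univ_nonempty
  have hfa : ∀ i, f i = a i / A := hf
  have hfpos : ∀ i, 0 < f i := fun i => by
    rw [hfa]; exact div_pos (Real.exp_pos _) hA
  have hfsum : ∑ i, f i = 1 := by
    simp_rw [hfa]
    rw [← Finset.sum_div, ← hAdef, div_self hA.ne']
  -- sum over Icc splits
  have hIcc : ∀ i, (∑ s ∈ Icc 1 t, x s i) = (∑ s ∈ Ico 1 t, x s i) + x t i := by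
    intro i
    rw [← Finset.Ico_add_one_right_eq_Icc, Finset.sum_Ico_succ_top ht]
  have hb : ∀ i, Real.exp (-η * ∑ s ∈ Icc 1 t, x s i) = a i * Real.exp (-c i) := by
    intro i
    rw [hadef, ← Real.exp_add, hIcc i]
    congr 1
    simp only [hcdef]
    ring
  set B : ℝ := ∑ j, a j * Real.exp (-c j) with hBdef
  have hBpos : 0 < B :=
    Finset.sum_pos (fun j _ => mul_pos (Real.exp_pos _) (Real.exp_pos _)) univ_nonempty
  have hga : ∀ i, g i = a i * Real.exp (-c i) / B := by
    intro i
    rw [hg i, hb i, hBdef]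
    congr 1
    exact Finset.sum_congr rfl fun j _ => hb j
  set Z : ℝ := ∑ j, f j * Real.exp (-c j) with hZdef
  have hZB : Z = B / A := by
    rw [hZdef, hBdef, Finset.sum_div]
    exact Finset.sum_congr rfl fun j _ => by rw [hfa j, div_mul_eq_mul_div]
  have hZpos : 0 < Z :=
    Finset.sum_pos (fun j _ => mul_pos (hfpos j) (Real.exp_pos _)) univ_nonempty
  clear_value a A B Z
  -- pointwise identity
  have hptw : ∀ i, (f i - g i) ^ 2 / f i = f i * (Z - Real.exp (-c i)) ^ 2 / Z ^ 2 := by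
    intro i
    have hfg : f i - g i = f i * (Z - Real.exp (-c i)) / Z := by
      rw [hfa i, hga i, hZB]
      field_simp
    rw [hfg, div_pow, mul_pow, div_div,
      div_eq_div_iff (mul_ne_zero (pow_ne_zero 2 hZpos.ne') (hfpos i).ne')
        (pow_ne_zero 2 hZpos.ne')]
    ring
  -- second-order remainder
  set s : Fin d → ℝ := fun i => Real.exp (-c i) - 1 + c i with hsdef
  have hexps : ∀ i, Real.exp (-c i) = 1 - c i + s i := by
    intro i; simp only [hsdef]; ring
  clear_value s
  have hs : ∀ i, |s i| ≤ c i ^ 2 := by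
    intro i
    have hle : |(-c i)| ≤ 1 := by rw [abs_neg]; linarith [hcb i]
    have h := Real.abs_exp_sub_one_sub_id_le hle
    have h1 : |s i| = |Real.exp (-c i) - 1 - (-c i)| := by
      congr 1; simp only [hsdef]; ring
    have h2 : (-c i) ^ 2 = c i ^ 2 := by ring
    rw [h1]; rw [← h2]; exact h
  set cbar : ℝ := ∑ j, f j * c j with hcbar
  set sbar : ℝ := ∑ j, f j * s j with hsbar
  clear_value cbar sbar
  have hZ1 : Z = 1 - cbar + sbar := by
    calc Z = ∑ j, (f j - f j * c j + f j * s j) := by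
          rw [hZdef]
          exact Finset.sum_congr rfl fun j _ => by rw [hexps j]; ring
      _ = (∑ j, f j) - (∑ j, f j * c j) + (∑ j, f j * s j) := by
          rw [Finset.sum_add_distrib, Finset.sum_sub_distrib]
      _ = 1 - cbar + sbar := by rw [hfsum, ← hcbar, ← hsbar]
  have hZdiff : ∀ i, Z - Real.exp (-c i) = (c i - cbar) + (sbar - s i) := by
    intro i; rw [hZ1, hexps i]; ring
  -- main sum bound
  have hbound1 : ∑ i, f i * (Z - Real.exp (-c i)) ^ 2
      ≤ 2 * (∑ i, f i * (c i - cbar) ^ 2) + 2 * (∑ i, f i * (s i - sbar) ^ 2) := by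
    rw [Finset.mul_sum, Finset.mul_sum, ← Finset.sum_add_distrib]
    apply Finset.sum_le_sum
    intro i _
    rw [hZdiff i]
    have hpq : ((c i - cbar) + (sbar - s i)) ^ 2
        ≤ 2 * (c i - cbar) ^ 2 + 2 * (s i - sbar) ^ 2 := by
      nlinarith [sq_nonneg ((c i - cbar) - (sbar - s i))]
    nlinarith [mul_le_mul_of_nonneg_left hpq (hfpos i).le]
  have hvar1 : ∑ i, f i * (c i - cbar) ^ 2 ≤ ∑ i, f i * c i ^ 2 := by
    have := var_le_aux f c hfsum
    simpa [← hcbar] using this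
  have hvar2 : ∑ i, f i * (s i - sbar) ^ 2 ≤ ∑ i, f i * s i ^ 2 := by
    have := var_le_aux f s hfsum
    simpa [← hsbar] using this
  have hcsq_nonneg : 0 ≤ ∑ i, f i * c i ^ 2 :=
    Finset.sum_nonneg fun i _ => mul_nonneg (hfpos i).le (sq_nonneg _)
  have hs2 : ∑ i, f i * s i ^ 2 ≤ (1 / 16) * ∑ i, f i * c i ^ 2 := by
    rw [Finset.mul_sum]
    apply Finset.sum_le_sum
    intro i _
    have h1 : s i ^ 2 ≤ c i ^ 4 := by
      calc s i ^ 2 = |s i| ^ 2 := (sq_abs _).symm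
        _ ≤ (c i ^ 2) ^ 2 := pow_le_pow_left₀ (abs_nonneg _) (hs i) 2
        _ = c i ^ 4 := by ring
    have h2 : c i ^ 2 ≤ 1 / 16 := by
      calc c i ^ 2 = |c i| ^ 2 := (sq_abs _).symm
        _ ≤ (1 / 4) ^ 2 := pow_le_pow_left₀ (abs_nonneg _) (hcb i) 2
        _ = 1 / 16 := by norm_num
    have h3 : s i ^ 2 ≤ (1 / 16) * c i ^ 2 := by
      calc s i ^ 2 ≤ c i ^ 4 := h1
        _ = c i ^ 2 * c i ^ 2 := by ring
        _ ≤ (1 / 16) * c i ^ 2 := mul_le_mul_of_nonneg_right h2 (sq_nonneg _)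
    calc f i * s i ^ 2 ≤ f i * ((1 / 16) * c i ^ 2) :=
          mul_le_mul_of_nonneg_left h3 (hfpos i).le
      _ = 1 / 16 * (f i * c i ^ 2) := by ring
  have hmain : ∑ i, f i * (Z - Real.exp (-c i)) ^ 2 ≤ (17 / 8) * ∑ i, f i * c i ^ 2 := by
    linarith [hbound1, hvar1, hvar2, hs2]
  -- lower bound on Z
  have hZlow : Real.exp (-(1 / 4 : ℝ)) ≤ Z := by
    calc Real.exp (-(1 / 4 : ℝ)) = (∑ j, f j) * Real.exp (-(1 / 4 : ℝ)) := by
          rw [hfsum, one_mul]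
      _ = ∑ j, f j * Real.exp (-(1 / 4 : ℝ)) := by rw [Finset.sum_mul]
      _ ≤ Z := by
          rw [hZdef]
          apply Finset.sum_le_sum
          intro j _
          apply mul_le_mul_of_nonneg_left _ (hfpos j).le
          apply Real.exp_le_exp.2
          have := (abs_le.1 (hcb j)).2
          linarith
  have hZ32 : (17 / 32 : ℝ) ≤ Z ^ 2 := by
    have hhalf : Real.exp (1 / 2 : ℝ) < 32 / 17 := by
      have h2 : Real.exp (1 / 2 : ℝ) * Real.exp (1 / 2 : ℝ) = Real.exp 1 := by
        rw [← Real.exp_add]; norm_num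
      have h3 := Real.exp_one_lt_d9
      nlinarith [Real.exp_pos (1 / 2 : ℝ)]
    have hq : Real.exp (-(1 / 4 : ℝ)) * Real.exp (-(1 / 4 : ℝ))
        = (Real.exp (1 / 2 : ℝ))⁻¹ := by
      rw [← Real.exp_add, ← Real.exp_neg]; norm_num
    have hinv : (17 / 32 : ℝ) ≤ (Real.exp (1 / 2 : ℝ))⁻¹ := by
      rw [le_inv_comm₀ (by norm_num) (Real.exp_pos _)]
      linarith
    have hex : 0 < Real.exp (-(1 / 4 : ℝ)) := Real.exp_pos _
    nlinarith [mul_le_mul hZlow hZlow hex.le hZpos.le]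
  -- combine
  have hsum_final : ∑ i, (f i - g i) ^ 2 / f i ≤ 4 * ∑ i, f i * c i ^ 2 := by
    calc ∑ i, (f i - g i) ^ 2 / f i
        = ∑ i, f i * (Z - Real.exp (-c i)) ^ 2 / Z ^ 2 :=
          Finset.sum_congr rfl fun i _ => hptw i
      _ = (∑ i, f i * (Z - Real.exp (-c i)) ^ 2) / Z ^ 2 := by rw [← Finset.sum_div]
      _ ≤ ((17 / 8) * ∑ i, f i * c i ^ 2) / Z ^ 2 := by
          apply div_le_div_of_nonneg_right hmain
          positivity
      _ ≤ 4 * ∑ i, f i * c i ^ 2 := by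
          rw [div_le_iff₀ (by positivity)]
          nlinarith [mul_le_mul_of_nonneg_right hZ32 hcsq_nonneg]
  have hrhs : 4 * ∑ i, f i * c i ^ 2
      = (2 * η) ^ 2 * ∑ i, f i * (x t i - M t i) ^ 2 := by
    rw [Finset.mul_sum, Finset.mul_sum]
    apply Finset.sum_congr rfl
    intro i _
    simp only [hcdef]
    ring
  calc Real.sqrt (∑ i, (f i - g i) ^ 2 / f i)
      ≤ Real.sqrt (4 * ∑ i, f i * c i ^ 2) := Real.sqrt_le_sqrt hsum_final
    _ = 2 * η * Real.sqrt (∑ i, f i * (x t i - M t i) ^ 2) := by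
        rw [hrhs, Real.sqrt_mul (by positivity), Real.sqrt_sq (by positivity)]
end

section
/- Let Z be a real-valued random variable taking finitely many values, and let a > 0. If E[Z] − Z ≤ a/2 almost surely, then E[exp(2(E[Z] − Z))] − 1 ≤ 4 · ((e^a − a − 1)/a²) · Var(Z). -/
/-!
With `φ(a) = (e^a - a - 1) / a²`, one has `e^y - y - 1 ≤ φ(a) y²` for all `y ≤ a`, i.e. `φ` is
nondecreasing. For `0 ≤ y ≤ a` this follows by comparing the series `∑ yⁿ⁺²/(n+2)!` and
`∑ aⁿ⁺²/(n+2)!` termwise; for `y ≤ 0` from `e^y ≤ 1 + y + y²/2` and `φ(a) ≥ 1/2`.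
Applied to `y = 2(E[Z] - Z) ≤ a` and integrated, the linear term has mean zero and the quadratic
term is `4 Var Z`.
-/

open MeasureTheory

namespace Real

open Nat in
theorem hasSum_exp_sub_sub_one (x : ℝ) :
    HasSum (fun n : ℕ => x ^ (n + 2) / (n + 2)!) (exp x - x - 1) := by
  have h := (hasSum_nat_add_iff' 2).2 (NormedSpace.expSeries_div_hasSum_exp x)
  rw [← exp_eq_exp_ℝ] at h
  simpa [Finset.sum_range_succ, sub_sub, add_comm] using h

theorem exp_le_one_add_add_sq_div_two_of_nonpos {y : ℝ} (hy : y ≤ 0) :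
    exp y ≤ 1 + y + y ^ 2 / 2 := by
  have hquad := quadratic_le_exp_of_nonneg (neg_nonneg.2 hy)
  have hprod : exp y * exp (-y) = 1 := by rw [← exp_add, add_neg_cancel, exp_zero]
  -- `(1 + y + y²/2)(1 - y + y²/2) = 1 + y⁴/4 ≥ 1 = exp y * exp (-y)`
  nlinarith [exp_pos y, sq_nonneg y, pow_two_nonneg (y ^ 2)]

theorem sq_mul_exp_sub_sub_one_le {y a : ℝ} (hy : 0 ≤ y) (hya : y ≤ a) :
    a ^ 2 * (exp y - y - 1) ≤ y ^ 2 * (exp a - a - 1) := by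
  refine hasSum_le (fun n => ?_) ((hasSum_exp_sub_sub_one y).mul_left _)
    ((hasSum_exp_sub_sub_one a).mul_left _)
  have hpow : y ^ n ≤ a ^ n := pow_le_pow_left₀ hy hya n
  have : a ^ 2 * y ^ (n + 2) ≤ y ^ 2 * a ^ (n + 2) := by
    rw [pow_add, pow_add]
    nlinarith [mul_nonneg (sq_nonneg a) (sq_nonneg y)]
  simp only [mul_div_assoc']
  gcongr

theorem exp_sub_sub_one_le_mul_sq {y a : ℝ} (ha : 0 < a) (hya : y ≤ a) :
    exp y - y - 1 ≤ (exp a - a - 1) / a ^ 2 * y ^ 2 := by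
  rw [div_mul_eq_mul_div, le_div_iff₀ (by positivity)]
  rcases le_total y 0 with hy | hy
  · have := exp_le_one_add_add_sq_div_two_of_nonpos hy
    have := quadratic_le_exp_of_nonneg ha.le
    nlinarith [sq_nonneg y, sq_nonneg a, mul_nonneg (sq_nonneg y) (sq_nonneg a)]
  · linarith [sq_mul_exp_sub_sub_one_le hy hya]

end Real

namespace MeasureTheory

variable {Ω : Type*} [MeasurableSpace Ω] {μ : Measure Ω}

theorem memLp_top_of_finite_range {E : Type*} [NormedAddCommGroup E] {f : Ω → E}
    (hf : AEStronglyMeasurable f μ) (hfin : (Set.range f).Finite) : MemLp f ⊤ μ := by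
  obtain ⟨C, hC⟩ := isBounded_iff_forall_norm_le.1 hfin.isBounded
  exact memLp_top_of_bound hf C (ae_of_all _ fun ω => hC _ (Set.mem_range_self ω))

theorem integral_exp_sub_one_le_of_ae_le [IsProbabilityMeasure μ] {X : Ω → ℝ}
    (hX : MemLp X 2 μ) {a : ℝ} (ha : 0 < a) (hXa : ∀ᵐ ω ∂μ, X ω ≤ a) :
    ∫ ω, Real.exp (X ω) ∂μ - 1
      ≤ ∫ ω, X ω ∂μ + (Real.exp a - a - 1) / a ^ 2 * ∫ ω, X ω ^ 2 ∂μ := by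
  have hXint : Integrable X μ := hX.integrable one_le_two
  have hexp : Integrable (fun ω => Real.exp (X ω)) μ := by
    refine .of_bound (Real.continuous_exp.comp_aestronglyMeasurable hX.1) (Real.exp a) ?_
    filter_upwards [hXa] with ω hω
    rw [Real.norm_of_nonneg (Real.exp_pos _).le]
    exact Real.exp_le_exp.2 hω
  have hdiff : Integrable (fun ω => Real.exp (X ω) - X ω) μ := hexp.sub hXint
  calc ∫ ω, Real.exp (X ω) ∂μ - 1 = ∫ ω, X ω ∂μ + ∫ ω, (Real.exp (X ω) - X ω - 1) ∂μ := by
        rw [integral_sub hdiff (integrable_const 1), integral_sub hexp hXint, integral_const,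
          probReal_univ, one_smul]
        ring
    _ ≤ ∫ ω, X ω ∂μ + ∫ ω, (Real.exp a - a - 1) / a ^ 2 * X ω ^ 2 ∂μ := by
        refine add_le_add le_rfl (integral_mono_ae (hdiff.sub (integrable_const 1))
          (hX.integrable_sq.const_mul _) ?_)
        exact hXa.mono fun ω hω => Real.exp_sub_sub_one_le_mul_sq ha hω
    _ = _ := by rw [integral_const_mul]

end MeasureTheory

/-- **A Bernstein-type exponential-moment inequality.**
If `Z` is a real random variable taking finitely many values and
`E[Z] − Z ≤ a/2` almost surely for some `a > 0`, then
`E[exp(2(E[Z] − Z))] − 1 ≤ 4 ((e^a − a − 1)/a²) Var(Z)`. -/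
theorem stmt_6 {Ω : Type*} [MeasurableSpace Ω] (μ : Measure Ω) [IsProbabilityMeasure μ]
    (Z : Ω → ℝ) (hZmeas : Measurable Z) (hZfin : (Set.range Z).Finite)
    (a : ℝ) (ha : 0 < a)
    (hbd : ∀ᵐ ω ∂μ, (∫ ω', Z ω' ∂μ) - Z ω ≤ a / 2) :
    (∫ ω, Real.exp (2 * ((∫ ω', Z ω' ∂μ) - Z ω)) ∂μ) - 1
      ≤ 4 * ((Real.exp a - a - 1) / a ^ 2) * ProbabilityTheory.variance Z μ := by
  set m := ∫ ω, Z ω ∂μ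
  have hZ : MemLp Z 2 μ :=
    (memLp_top_of_finite_range hZmeas.aestronglyMeasurable hZfin).mono_exponent le_top
  have hX : MemLp (fun ω => 2 * (m - Z ω)) 2 μ := ((memLp_const m).sub hZ).const_mul 2
  have hmean : ∫ ω, 2 * (m - Z ω) ∂μ = 0 := by
    rw [integral_const_mul, integral_sub (integrable_const m) (hZ.integrable one_le_two)]
    simp [m]
  have hsq : ∫ ω, (2 * (m - Z ω)) ^ 2 ∂μ = 4 * ProbabilityTheory.variance Z μ := by
    rw [ProbabilityTheory.variance_eq_integral hZmeas.aemeasurable, ← integral_const_mul]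
    congr 1 with ω
    ring
  have key := integral_exp_sub_one_le_of_ae_le hX ha (hbd.mono fun ω hω => by linarith)
  rw [hmean, hsq] at key
  linarith
end

section
/- Let F ⊂ ℝ^d be nonempty compact convex, and for each t ∈ [T] let C_t be a map assigning to each history (x_1,…,x_{t−1}) ∈ (ℝ^d)^{t−1} a nonempty subset C_t(x_1,…,x_{t−1}) ⊆ ℝ^d. Let Rel be a real-valued function on finite sequences in ℝ^d of length at most T, and suppose a strategy selects f_t = f_t(x_1,…,x_{t−1}) ∈ F such that for every t ∈ [T] and every history with x_s ∈ C_s(x_1,…,x_{s−1}) for all s < t: sup_{x ∈ C_t(x_1,…,x_{t−1})} [ ⟨f_t, x⟩ + Rel(x_1,…,x_{t−1},x) ] ≤ Rel(x_1,…,x_{t−1}), and suppose moreover Rel(x_1,…,x_T) ≥ − inf_{f∈F} Σ_{t=1}^T ⟨f, x_t⟩ for all such sequences. Then for every sequence with x_t ∈ C_t(x_1,…,x_{t−1}) for all t: Σ_{t=1}^T ⟨f_t, x_t⟩ − inf_{f∈F} Σ_{t=1}^T ⟨f, x_t⟩ ≤ Rel(∅). -/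
/-!
Along a play respecting the constraints, admissibility says that the learner's loss at
round `t` is at most the drop `Rel(x₁,…,x_{t-1}) - Rel(x₁,…,x_t)`. Summing over the rounds
telescopes to `Σ_t ⟨f_t, x_t⟩ + Rel(x₁,…,x_T) ≤ Rel(∅)`, and the final condition
`Rel(x₁,…,x_T) ≥ -inf_{f∈F} Σ_t ⟨f, x_t⟩` turns this into the regret bound.
-/

variable {α : Type*}

def RespectsConstraints (C : List α → Set α) (L : List α) : Prop :=
  ∀ i : Fin L.length, L.get i ∈ C (L.take i)

theorem RespectsConstraints.of_append_singleton {C : List α → Set α} {L : List α} {z : α}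
    (h : RespectsConstraints C (L ++ [z])) : RespectsConstraints C L ∧ z ∈ C L := by
  constructor
  · intro i
    simpa [List.getElem_append_left, List.take_append_of_le_length i.2.le] using
      h ⟨i, by simp⟩
  · simpa using h ⟨L.length, by simp⟩

theorem sum_fin_length_append_singleton (g : List α → α → ℝ) (L : List α) (z : α) :
    ∑ i : Fin (L ++ [z]).length, g ((L ++ [z]).take i) ((L ++ [z]).get i)
      = ∑ i : Fin L.length, g (L.take i) (L.get i) + g L z := by
  have hlen : L.length + 1 = (L ++ [z]).length := by simp
  rw [← Fin.sum_congr' _ hlen, Fin.sum_univ_castSucc]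
  simp [List.getElem_append_left, List.take_append_of_le_length]

theorem cumulative_loss_add_rel_le_rel_nil {C : List α → Set α} {Rel : List α → ℝ}
    {loss : List α → α → ℝ} {T : ℕ}
    (hadm : ∀ L, L.length < T → RespectsConstraints C L →
      ∀ z ∈ C L, loss L z + Rel (L ++ [z]) ≤ Rel L)
    (L : List α) (hlen : L.length ≤ T) (hL : RespectsConstraints C L) :
    ∑ i : Fin L.length, loss (L.take i) (L.get i) + Rel L ≤ Rel [] := by
  induction L using List.reverseRecOn with
  | nil => simp
  | append_singleton L z ih =>
    obtain ⟨hL, hz⟩ := hL.of_append_singleton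
    have hlt : L.length < T := by simp at hlen; omega
    rw [sum_fin_length_append_singleton]
    linarith [hadm L hlt hL z hz, ih hlt.le hL]

theorem stmt_8_general {d T : ℕ} (F : Set (Fin d → ℝ))
    (C : List (Fin d → ℝ) → Set (Fin d → ℝ))
    (Rel : List (Fin d → ℝ) → ℝ)
    (φ : List (Fin d → ℝ) → (Fin d → ℝ))
    (hadm : ∀ L : List (Fin d → ℝ), L.length < T →
      (∀ i : Fin L.length, L.get i ∈ C (L.take i)) →
      ∀ z ∈ C L, (∑ j, φ L j * z j) + Rel (L ++ [z]) ≤ Rel L)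
    (hfinal : ∀ L : List (Fin d → ℝ), L.length = T →
      (∀ i : Fin L.length, L.get i ∈ C (L.take i)) →
      Rel L ≥ - sInf ((fun f : Fin d → ℝ =>
        ∑ i : Fin L.length, ∑ j, f j * L.get i j) '' F)) :
    ∀ L : List (Fin d → ℝ), L.length = T →
      (∀ i : Fin L.length, L.get i ∈ C (L.take i)) →
      (∑ i : Fin L.length, ∑ j, φ (L.take i) j * L.get i j)
          - sInf ((fun f : Fin d → ℝ =>
              ∑ i : Fin L.length, ∑ j, f j * L.get i j) '' F)
        ≤ Rel [] := by
  intro L hlen hL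
  have htelescope := cumulative_loss_add_rel_le_rel_nil
    (loss := fun M z => ∑ j, φ M j * z j) hadm L hlen.le hL
  linarith [hfinal L hlen hL]

/-- **Admissible relaxations bound regret (constrained adversary).**
Histories are lists of adversary moves in `ℝ^d`; a list `L` is valid if each of its
elements lies in the constraint set `C` of the prefix preceding it.  If the strategy
`φ` (playing `φ(history) ∈ F`) certifies the one-step admissibility condition
`sup_{z ∈ C(L)} [⟨φ L, z⟩ + Rel(L ++ [z])] ≤ Rel L` for every valid history of length
`< T`, and `Rel L ≥ − inf_{f∈F} Σ_t ⟨f, L_t⟩` for every valid `L` of length `T`, then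
for every valid sequence of length `T` the regret is at most `Rel([])`. -/
theorem stmt_8 {d T : ℕ} (F : Set (Fin d → ℝ)) (hFne : F.Nonempty)
    (hFconv : Convex ℝ F) (hFcomp : IsCompact F)
    (C : List (Fin d → ℝ) → Set (Fin d → ℝ))
    (Rel : List (Fin d → ℝ) → ℝ)
    (φ : List (Fin d → ℝ) → (Fin d → ℝ))
    (hφF : ∀ L, φ L ∈ F)
    (hCne : ∀ L : List (Fin d → ℝ), L.length < T →
      (∀ i : Fin L.length, L.get i ∈ C (L.take i)) → (C L).Nonempty)
    (hadm : ∀ L : List (Fin d → ℝ), L.length < T →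
      (∀ i : Fin L.length, L.get i ∈ C (L.take i)) →
      ∀ z ∈ C L, (∑ j, φ L j * z j) + Rel (L ++ [z]) ≤ Rel L)
    (hfinal : ∀ L : List (Fin d → ℝ), L.length = T →
      (∀ i : Fin L.length, L.get i ∈ C (L.take i)) →
      Rel L ≥ - sInf ((fun f : Fin d → ℝ =>
        ∑ i : Fin L.length, ∑ j, f j * L.get i j) '' F)) :
    ∀ L : List (Fin d → ℝ), L.length = T →
      (∀ i : Fin L.length, L.get i ∈ C (L.take i)) →
      (∑ i : Fin L.length, ∑ j, φ (L.take i) j * L.get i j)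
          - sInf ((fun f : Fin d → ℝ =>
              ∑ i : Fin L.length, ∑ j, f j * L.get i j) '' F)
        ≤ Rel [] :=
  stmt_8_general F C Rel φ hadm hfinal
end

section
/- Let A > 0, s > 0, set η₀ = 4A/s and η_k = η₀ 2^{−k} for k ≥ 1. Let N ≥ 2 be an integer, let r_1,…,r_N be real numbers with r_k ≤ 2A η_k^{−1} for every k ∈ {1,…,N}, and let Ψ ≥ 0 satisfy A η_{N−1}^{−2} < Ψ. Then Σ_{k=1}^N r_k + s·N ≤ 16 √(A Ψ). -/
/-!
The rate `η_k = (4A/s) 2^{-k}` turns the per-phase bound `2A η_k⁻¹` into `(s/2) 2^k`, so the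
regrets of the `N` phases sum to at most `s (2^N - 1)`, and the `s N` discarded rounds cost no
more than that. Both are thus controlled by `s 2^{N-1}`, while the trigger of the last phase change,
`A η_{N-1}^{-2} < Ψ`, reads `(s 2^{N-1})² < 16 A Ψ`.
-/

open Finset

lemma two_mul_mul_inv_doubling_rate {A : ℝ} (hA : A ≠ 0) (s : ℝ) (k : ℕ) :
    2 * A * ((4 * A / s) * (2 : ℝ) ^ (-(k : ℤ)))⁻¹ = s / 2 * 2 ^ k := by
  rw [zpow_neg, zpow_natCast, mul_inv, inv_inv, inv_div]
  field_simp
  ring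

lemma sum_Icc_one_two_pow (N : ℕ) : ∑ k ∈ Icc 1 N, (2 : ℝ) ^ k = 2 * (2 ^ N - 1) := by
  induction N with
  | zero => simp
  | succ N ih =>
    rw [sum_Icc_succ_top (by omega), ih, pow_succ]
    ring

lemma sum_le_of_le_mul_two_pow {r : ℕ → ℝ} {c : ℝ} {N : ℕ}
    (hr : ∀ k ∈ Icc 1 N, r k ≤ c * 2 ^ k) : ∑ k ∈ Icc 1 N, r k ≤ 2 * c * (2 ^ N - 1) := by
  calc ∑ k ∈ Icc 1 N, r k ≤ ∑ k ∈ Icc 1 N, c * 2 ^ k := sum_le_sum hr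
    _ = 2 * c * (2 ^ N - 1) := by rw [← mul_sum, sum_Icc_one_two_pow]; ring

lemma mul_two_pow_le_of_inv_doubling_rate_sq_lt {A s Ψ : ℝ} (hA : 0 < A) {n : ℕ}
    (h : A * (((4 * A / s) * (2 : ℝ) ^ (-(n : ℤ))) ^ 2)⁻¹ < Ψ) :
    s * 2 ^ n ≤ 4 * Real.sqrt (A * Ψ) := by
  have hsq : (s * 2 ^ n) ^ 2 < 16 * (A * Ψ) := by
    have hrate := two_mul_mul_inv_doubling_rate hA.ne' s n
    have hid : A * (((4 * A / s) * (2 : ℝ) ^ (-(n : ℤ))) ^ 2)⁻¹ = (s * 2 ^ n) ^ 2 / (16 * A) := by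
      rw [← inv_pow, eq_div_iff (by positivity)]
      linear_combination 4 * (2 * A * ((4 * A / s) * (2 : ℝ) ^ (-(n : ℤ)))⁻¹ + s / 2 * 2 ^ n) * hrate
    rw [hid, div_lt_iff₀ (by positivity)] at h
    linarith
  calc s * 2 ^ n ≤ |s * 2 ^ n| := le_abs_self _
    _ ≤ Real.sqrt (16 * (A * Ψ)) := Real.abs_le_sqrt hsq.le
    _ = 4 * Real.sqrt (A * Ψ) := by
      rw [Real.sqrt_mul (by norm_num), show (16 : ℝ) = 4 ^ 2 by norm_num,
        Real.sqrt_sq (by norm_num)]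

lemma two_pow_le_two_mul_two_pow_sub_one (N : ℕ) : (2 : ℝ) ^ N ≤ 2 * 2 ^ (N - 1) := by
  cases N with
  | zero => norm_num
  | succ N => rw [Nat.add_sub_cancel, pow_succ, mul_comm]

theorem stmt_12_general (A s : ℝ) (hA : 0 < A) (hs : 0 < s)
    (η : ℕ → ℝ) (hη : ∀ k, η k = (4 * A / s) * (2 : ℝ) ^ (-(k : ℤ)))
    (N : ℕ) (r : ℕ → ℝ)
    (hr : ∀ k ∈ Icc 1 N, r k ≤ 2 * A * (η k)⁻¹)
    (Ψ : ℝ) (hlast : A * ((η (N - 1)) ^ 2)⁻¹ < Ψ) :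
    (∑ k ∈ Icc 1 N, r k) + s * N ≤ 16 * Real.sqrt (A * Ψ) := by
  have hregret : ∑ k ∈ Icc 1 N, r k ≤ s * (2 ^ N - 1) := by
    have h := sum_le_of_le_mul_two_pow (c := s / 2) fun k hk ↦
      (hη k ▸ two_mul_mul_inv_doubling_rate hA.ne' s k) ▸ hr k hk
    linarith
  have hdiscarded : (N : ℝ) ≤ 2 ^ N - 1 := by
    have : (N + 1 : ℝ) ≤ 2 ^ N := by exact_mod_cast Nat.lt_two_pow_self
    linarith
  have hpenultimate : s * 2 ^ (N - 1) ≤ 4 * Real.sqrt (A * Ψ) :=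
    mul_two_pow_le_of_inv_doubling_rate_sq_lt hA (hη (N - 1) ▸ hlast)
  calc (∑ k ∈ Icc 1 N, r k) + s * N ≤ 2 * (s * 2 ^ N) := by nlinarith
    _ ≤ 4 * (s * 2 ^ (N - 1)) := by nlinarith [two_pow_le_two_mul_two_pow_sub_one N]
    _ ≤ 16 * Real.sqrt (A * Ψ) := by linarith

/-- **Arithmetic core of the doubling trick.**
With `η₀ = 4A/s`, `η_k = η₀ 2^{−k}`, if the per-phase regrets satisfy
`r_k ≤ 2A η_k⁻¹` for `k ∈ {1,…,N}` (with `N ≥ 2`) and the accumulated statistic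
`Ψ ≥ 0` satisfies `A η_{N−1}^{−2} < Ψ`, then `Σ_{k=1}^N r_k + s N ≤ 16 √(AΨ)`. -/
theorem stmt_12 (A s : ℝ) (hA : 0 < A) (hs : 0 < s)
    (η : ℕ → ℝ) (hη : ∀ k, η k = (4 * A / s) * (2 : ℝ) ^ (-(k : ℤ)))
    (N : ℕ) (hN : 2 ≤ N) (r : ℕ → ℝ)
    (hr : ∀ k ∈ Icc 1 N, r k ≤ 2 * A * (η k)⁻¹)
    (Ψ : ℝ) (hΨ : 0 ≤ Ψ) (hlast : A * ((η (N - 1)) ^ 2)⁻¹ < Ψ) :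
    (∑ k ∈ Icc 1 N, r k) + s * N ≤ 16 * Real.sqrt (A * Ψ) :=
  stmt_12_general A s hA hs η hη N r hr Ψ hlast
end

section
/- Let B be a real Banach space (separable, with its Borel σ-algebra), let x and x' be independent, identically distributed Bochner-integrable B-valued random variables, and let ε be a Rademacher random variable (taking values ±1 with probability 1/2 each) independent of (x, x'). Then for every w ∈ B: −‖E[x]‖ + E[‖w − x‖] ≤ E[‖w + ε(x' − x)‖]. -/
/-!
The law of the sign is irrelevant as long as it lives on `{1, -1}`: the pair `(x, x')` is
exchangeable, so swapping it turns `w - (x' - x)` into `w + (x' - x)`, and the right-hand side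
equals `E‖w + x' - x‖`. For a fixed value `a` of `x`, the triangle inequality and Jensen's
inequality give `‖w - a‖ - ‖E x‖ ≤ ‖w - a + E x'‖ ≤ E‖w - a + x'‖`; integrating in `a`, which
independence allows (the law of `(x, x')` is the product of the law of `x` with itself),
yields the claim.
-/

open MeasureTheory ProbabilityTheory unitInterval
open scoped ENNReal

lemma half_smul_dirac_add_half_smul_dirac_eq_bernoulliMeasure {X : Type*} [MeasurableSpace X]
    (x y : X) :
    (1 / 2 : ℝ≥0∞) • Measure.dirac x + (1 / 2 : ℝ≥0∞) • Measure.dirac y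
      = Ber(x, y, ⟨1 / 2, by norm_num, by norm_num⟩) := by
  have hp : toNNReal ⟨1 / 2, by norm_num, by norm_num⟩ = 2⁻¹ := by ext; simp
  have hq : toNNReal (σ ⟨1 / 2, by norm_num, by norm_num⟩) = 2⁻¹ := by ext; norm_num
  rw [bernoulliMeasure_def, hp, hq]
  simp [ENNReal.smul_def]

section Symmetrization

variable {B : Type*} [NormedAddCommGroup B] [MeasurableSpace B] {ν : Measure B}

lemma integral_norm_sub_sub_eq_integral_norm_add_sub [SFinite ν] (w : B) :
    ∫ p, ‖w - (p.2 - p.1)‖ ∂(ν.prod ν) = ∫ p, ‖w + (p.2 - p.1)‖ ∂(ν.prod ν) := by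
  rw [← integral_prod_swap]
  congr with p
  rw [Prod.snd_swap, Prod.fst_swap, ← neg_sub p.1, ← sub_eq_add_neg]

lemma integrable_norm_add_sub_prod [IsFiniteMeasure ν] (hν : Integrable id ν) (w : B) :
    Integrable (fun p : B × B => ‖w + (p.2 - p.1)‖) (ν.prod ν) :=
  ((integrable_const w).add ((hν.comp_snd ν).sub (hν.comp_fst ν))).norm

variable [NormedSpace ℝ B]

lemma integral_norm_add_smul_sub_bernoulliMeasure [IsFiniteMeasure ν] (hν : Integrable id ν)
    (w : B) (p : I) :
    ∫ q, ‖w + q.2 • (q.1.2 - q.1.1)‖ ∂((ν.prod ν).prod Ber((1 : ℝ), -1, p))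
      = ∫ q, ‖w + (q.2 - q.1)‖ ∂(ν.prod ν) := by
  have hsmul : Integrable (fun q : (B × B) × ℝ => q.2 • (q.1.2 - q.1.1))
      ((ν.prod ν).prod Ber((1 : ℝ), -1, p)) :=
    ((integrable_bernoulliMeasure (1 : ℝ) (-1) p id).smul_prod
      ((hν.comp_snd ν).sub (hν.comp_fst ν))).swap
  have hint : Integrable (fun q : (B × B) × ℝ => ‖w + q.2 • (q.1.2 - q.1.1)‖)
      ((ν.prod ν).prod Ber((1 : ℝ), -1, p)) := ((integrable_const w).add hsmul).norm
  rw [integral_prod_symm _ hint, integral_bernoulliMeasure]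
  simp_rw [one_smul, neg_one_smul, ← sub_eq_add_neg,
    integral_norm_sub_sub_eq_integral_norm_add_sub]
  rw [← add_smul, add_sub_cancel, one_smul]

variable [CompleteSpace B] [IsProbabilityMeasure ν]

lemma norm_sub_norm_integral_le_integral_norm_add (hν : Integrable id ν) (v : B) :
    ‖v‖ - ‖∫ b, b ∂ν‖ ≤ ∫ b, ‖v + b‖ ∂ν :=
  calc ‖v‖ - ‖∫ b, b ∂ν‖ ≤ ‖v + ∫ b, b ∂ν‖ := norm_sub_le_norm_add _ _
    _ = ‖∫ b, (v + b) ∂ν‖ := by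
      rw [integral_add (integrable_const v) (g := fun b => b) hν, integral_const, probReal_univ,
        one_smul]
    _ ≤ ∫ b, ‖v + b‖ ∂ν := norm_integral_le_integral_norm _

lemma neg_norm_integral_add_integral_norm_sub_le (hν : Integrable id ν) (w : B) :
    -‖∫ a, a ∂ν‖ + ∫ a, ‖w - a‖ ∂ν ≤ ∫ p, ‖w + (p.2 - p.1)‖ ∂(ν.prod ν) := by
  have hdist : Integrable (fun a => ‖w - a‖) ν := ((integrable_const w).sub hν).norm
  have hprod := integrable_norm_add_sub_prod hν w
  calc -‖∫ a, a ∂ν‖ + ∫ a, ‖w - a‖ ∂ν = ∫ a, (‖w - a‖ - ‖∫ b, b ∂ν‖) ∂ν := by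
        rw [integral_sub hdist (integrable_const _), integral_const, probReal_univ, one_smul,
          neg_add_eq_sub]
    _ ≤ ∫ a, ∫ b, ‖w + (b - a)‖ ∂ν ∂ν :=
      integral_mono (hdist.sub (integrable_const _)) hprod.integral_prod_left fun a => by
        simpa only [sub_add_eq_add_sub, add_sub_assoc] using
          norm_sub_norm_integral_le_integral_norm_add hν (w - a)
    _ = ∫ p, ‖w + (p.2 - p.1)‖ ∂(ν.prod ν) := (integral_prod _ hprod).symm

end Symmetrization

theorem stmt_13_general {Ω B : Type*} [MeasurableSpace Ω]
    [NormedAddCommGroup B] [NormedSpace ℝ B] [CompleteSpace B]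
    [MeasurableSpace B] [BorelSpace B] [SecondCountableTopology B]
    (μ : Measure Ω) [IsProbabilityMeasure μ]
    (x x' : Ω → B) (ε : Ω → ℝ)
    (hxint : Integrable x μ)
    (hindep : IndepFun x x' μ) (hident : IdentDistrib x x' μ μ)
    (hεlaw : μ.map ε = (1 / 2 : ℝ≥0∞) • Measure.dirac (1 : ℝ)
        + (1 / 2 : ℝ≥0∞) • Measure.dirac (-1 : ℝ))
    (hεindep : IndepFun (fun ω => (x ω, x' ω)) ε μ)
    (w : B) :
    -‖∫ ω, x ω ∂μ‖ + ∫ ω, ‖w - x ω‖ ∂μ ≤ ∫ ω, ‖w + ε ω • (x' ω - x ω)‖ ∂μ := by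
  rw [half_smul_dirac_add_half_smul_dirac_eq_bernoulliMeasure] at hεlaw
  have hxm := hident.aemeasurable_fst
  have hx'm := hident.aemeasurable_snd
  have hεm : AEMeasurable ε μ := .of_map_ne_zero (hεlaw ▸ IsProbabilityMeasure.ne_zero _)
  set ν := μ.map x
  have : IsProbabilityMeasure ν := Measure.isProbabilityMeasure_map hxm
  have hν : Integrable id ν := (integrable_map_measure aestronglyMeasurable_id hxm).2 hxint
  have hlaw : μ.map (fun ω => ((x ω, x' ω), ε ω)) = (ν.prod ν).prod (μ.map ε) := by
    rw [(indepFun_iff_map_prod_eq_prod_map_map (hxm.prodMk hx'm) hεm).1 hεindep,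
      (indepFun_iff_map_prod_eq_prod_map_map hxm hx'm).1 hindep, ← hident.map_eq]
  have hmean : ∫ ω, x ω ∂μ = ∫ a, a ∂ν := (integral_map hxm aestronglyMeasurable_id).symm
  have hdist : ∫ ω, ‖w - x ω‖ ∂μ = ∫ a, ‖w - a‖ ∂ν :=
    (integral_map hxm (by fun_prop : Continuous fun a : B => ‖w - a‖).aestronglyMeasurable).symm
  have hsymm : ∫ ω, ‖w + ε ω • (x' ω - x ω)‖ ∂μ
      = ∫ q, ‖w + q.2 • (q.1.2 - q.1.1)‖ ∂((ν.prod ν).prod (μ.map ε)) := by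
    rw [← hlaw, integral_map ((hxm.prodMk hx'm).prodMk hεm) (by fun_prop :
      Continuous fun q : (B × B) × ℝ => ‖w + q.2 • (q.1.2 - q.1.1)‖).aestronglyMeasurable]
  rw [hmean, hdist, hsymm, hεlaw, integral_norm_add_smul_sub_bernoulliMeasure hν]
  exact neg_norm_integral_add_integral_norm_sub_le hν w

/-- **Symmetrization inequality with a Rademacher sign.**
Let `B` be a separable real Banach space (with its Borel σ-algebra), `x, x'`
independent identically distributed Bochner-integrable `B`-valued random variables,
and `ε` a Rademacher random variable independent of `(x, x')`.  Then for every
`w ∈ B`: `−‖E[x]‖ + E‖w − x‖ ≤ E‖w + ε(x' − x)‖`. -/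
theorem stmt_13 {Ω B : Type*} [MeasurableSpace Ω]
    [NormedAddCommGroup B] [NormedSpace ℝ B] [CompleteSpace B]
    [MeasurableSpace B] [BorelSpace B] [SecondCountableTopology B]
    (μ : Measure Ω) [IsProbabilityMeasure μ]
    (x x' : Ω → B) (ε : Ω → ℝ)
    (hx : Measurable x) (hx' : Measurable x') (hε : Measurable ε)
    (hxint : Integrable x μ) (hx'int : Integrable x' μ)
    (hindep : IndepFun x x' μ) (hident : IdentDistrib x x' μ μ)
    (hεlaw : μ.map ε = (1 / 2 : ℝ≥0∞) • Measure.dirac (1 : ℝ)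
        + (1 / 2 : ℝ≥0∞) • Measure.dirac (-1 : ℝ))
    (hεindep : IndepFun (fun ω => (x ω, x' ω)) ε μ)
    (w : B) :
    -‖∫ ω, x ω ∂μ‖ + ∫ ω, ‖w - x ω‖ ∂μ ≤ ∫ ω, ‖w + ε ω • (x' ω - x ω)‖ ∂μ :=
  stmt_13_general μ x x' ε hxint hindep hident hεlaw hεindep w
end
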